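/- arXiv:1606.03359 — 10 statements merged into one kernel-verified Lean document; each statement's English description precedes it below -/
import Mathlib

section
/- Let W be a sequentially compact Hausdorff topological space (first countable) with a lower semicontinuous asymmetric quasi-distance d_W (satisfying d_W(x,x)=0 and the triangle inequality). Let Z be first countable, z_0 an accumulation point of Z, and v: Z → W a function such that lim_{z,z'→z_0} min(d_W(v(z),v(z')), d_W(v(z'),v(z))) = 0 and the set of all limit points of v near z_0 is separated by d_W (i.e. two points u,w in it with d_W(u,w)=0 must be equal). Then the limit v̄ := lim_{z→z_0} v(z) exists in W. -/
open Filter Topology Set ENNReal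

/-!
Along any sequence `zₖ → z₀`, sequential compactness of `W` extracts a subsequence with
`v zₖ → u`, and every such `u` is a limit point of `v` near `z₀`. Given two such sequential
limits `u` and `w`, lower semicontinuity of `min (d x y) (d y x)` together with the Cauchy
condition forces `d u w = 0` or `d w u = 0`, so separation gives `u = w`. Hence all
subsequential limits agree, which in a first countable setting means `v` converges.
-/

theorem LowerSemicontinuous.le_of_tendsto {X γ : Type*} [TopologicalSpace X]
    [CompleteLinearOrder γ] [TopologicalSpace γ] [OrderTopology γ] {g : X → γ}
    (hg : LowerSemicontinuous g) {a : ℕ → X} {x : X} {c : γ}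
    (ha : Tendsto a atTop (𝓝 x)) (hga : Tendsto (g ∘ a) atTop (𝓝 c)) : g x ≤ c :=
  calc g x ≤ liminf g (𝓝 x) := hg.le_liminf x
    _ ≤ liminf g (map a atTop) := liminf_le_liminf_of_le ha
    _ = c := hga.liminf_eq

theorem mem_closure_image_of_tendsto_comp {Z W : Type*} [TopologicalSpace W] {v : Z → W}
    {l : Filter Z} {x : ℕ → Z} {u : W} (hx : Tendsto x atTop l)
    (hvx : Tendsto (v ∘ x) atTop (𝓝 u)) {N : Set Z} (hN : N ∈ l) : u ∈ closure (v '' N) :=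
  mem_closure_of_tendsto hvx ((hx.eventually_mem hN).mono fun _ hk => mem_image_of_mem v hk)

theorem exists_tendsto_of_seqLimit_unique {Z W : Type*} [TopologicalSpace W] [SeqCompactSpace W]
    {l : Filter Z} [l.IsCountablyGenerated] [l.NeBot] {v : Z → W}
    (huniq : ∀ u w : W, ∀ x y : ℕ → Z, Tendsto x atTop l → Tendsto (v ∘ x) atTop (𝓝 u) →
      Tendsto y atTop l → Tendsto (v ∘ y) atTop (𝓝 w) → u = w) :
    ∃ w, Tendsto v l (𝓝 w) := by
  obtain ⟨x, hx⟩ := l.exists_seq_tendsto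
  obtain ⟨w, φ, hφ, hw⟩ := SeqCompactSpace.tendsto_subseq (v ∘ x)
  refine ⟨w, tendsto_of_subseq_tendsto fun y hy => ?_⟩
  obtain ⟨u, ψ, hψ, hu⟩ := SeqCompactSpace.tendsto_subseq (v ∘ y)
  have huw : u = w := huniq u w (y ∘ ψ) (x ∘ φ) (hy.comp hψ.tendsto_atTop) hu
    (hx.comp hφ.tendsto_atTop) hw
  exact ⟨ψ, huw ▸ hu⟩

theorem stmt0_general {W Z : Type*} [TopologicalSpace W]
    [SeqCompactSpace W]
    [TopologicalSpace Z] [FirstCountableTopology Z]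
    (dW : W → W → ℝ≥0∞)
    (hlsc : LowerSemicontinuous (fun p : W × W => dW p.1 p.2))
    (z0 : Z) [hz0 : (𝓝[≠] z0).NeBot]
    (v : Z → W)
    (hcauchy : Tendsto (fun p : Z × Z => min (dW (v p.1) (v p.2)) (dW (v p.2) (v p.1)))
      ((𝓝[≠] z0) ×ˢ (𝓝[≠] z0)) (𝓝 0))
    (hsep : ∀ u w : W, (∀ N ∈ 𝓝 z0, u ∈ closure (v '' N)) →
      (∀ N ∈ 𝓝 z0, w ∈ closure (v '' N)) → dW u w = 0 → u = w) :
    ∃ w : W, Tendsto v (𝓝[≠] z0) (𝓝 w) := by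
  have hsymm : LowerSemicontinuous fun p : W × W => min (dW p.1 p.2) (dW p.2 p.1) :=
    hlsc.inf (hlsc.comp continuous_swap)
  refine exists_tendsto_of_seqLimit_unique fun u w x y hx hu hy hw => ?_
  have hlim : ∀ {x : ℕ → Z} {u : W}, Tendsto x atTop (𝓝[≠] z0) →
      Tendsto (v ∘ x) atTop (𝓝 u) → ∀ N ∈ 𝓝 z0, u ∈ closure (v '' N) :=
    fun hx hu N hN => mem_closure_image_of_tendsto_comp hx hu (nhdsWithin_le_nhds hN)
  have hmin : min (dW u w) (dW w u) = 0 :=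
    nonpos_iff_eq_zero.mp (hsymm.le_of_tendsto (hu.prodMk_nhds hw)
      (hcauchy.comp (hx.prodMk hy)))
  rcases min_eq_iff.mp hmin with ⟨huw, -⟩ | ⟨hwu, -⟩
  · exact hsep u w (hlim hx hu) (hlim hy hw) huw
  · exact (hsep w u (hlim hy hw) (hlim hx hu) hwu).symm

/-- existence of the limit of `v` at `z₀` for a map into a sequentially
compact Hausdorff first-countable space with a l.s.c. asymmetric quasi-distance,
under the asymmetric Cauchy condition and separation of the set of limit points. -/
theorem stmt0 {W Z : Type*} [TopologicalSpace W] [T2Space W]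
    [FirstCountableTopology W] [SeqCompactSpace W]
    [TopologicalSpace Z] [FirstCountableTopology Z]
    (dW : W → W → ℝ≥0∞)
    (hrefl : ∀ x, dW x x = 0)
    (htri : ∀ x y z, dW x z ≤ dW x y + dW y z)
    (hlsc : LowerSemicontinuous (fun p : W × W => dW p.1 p.2))
    (z0 : Z) [hz0 : (𝓝[≠] z0).NeBot]
    (v : Z → W)
    (hcauchy : Tendsto (fun p : Z × Z => min (dW (v p.1) (v p.2)) (dW (v p.2) (v p.1)))
      ((𝓝[≠] z0) ×ˢ (𝓝[≠] z0)) (𝓝 0))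
    (hsep : ∀ u w : W, (∀ N ∈ 𝓝 z0, u ∈ closure (v '' N)) →
      (∀ N ∈ 𝓝 z0, w ∈ closure (v '' N)) → dW u w = 0 → u = w) :
    ∃ w : W, Tendsto v (𝓝[≠] z0) (𝓝 w) :=
  stmt0_general dW hlsc z0 (hz0 := hz0) v hcauchy hsep
end

section
/- Let E ⊂ ℝ be compact with min E < max E, let L(E) be the set of limit points of E. Let f: E → ℝ be upper semicontinuous and left-continuous, and g ∈ C(E) strictly increasing. Assume: (i) for every bounded connected component I = (I⁻, I⁺) of ℝ \ E with endpoints in E, (f(I⁺) − f(I⁻))/(g(I⁺) − g(I⁻)) ≤ 1; (ii) for every t ∈ L(E) which is an accumulation point of L(E) ∩ (−∞, t), liminf_{s↑t, s∈L(E)} (f(t)−f(s))/(g(t)−g(s)) ≤ 1. Then the map s ↦ f(s) − g(s) is nonincreasing on E; in particular f(max E) − f(min E) ≤ g(max E) − g(min E). -/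
/-!
Suppose `a < b` in `E` but `f b - f a > g b - g a`. For small `δ > 0` let `c δ` be the first point
of `E ∩ [a, b]` where `f - f a` reaches `(1 + δ) (g - g a) + δ`; it exists by upper semicontinuity,
and `f - (1 + δ) g` is strictly larger at `c δ` than at every earlier point of `E ∩ [a, c δ)`.
If `c δ` is not a left limit of limit points of `E`, then the points of `E` just before it are
isolated, and the hole condition, carried across them by left-continuity, shows that `f - g` does
not increase up to `c δ`: a contradiction. Otherwise the difference quotient at `c δ` is eventually
`≥ 1 + δ` along `L(E)`, so hypothesis (ii) can only hold because it tends to `+∞` (the `liminf`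
of a function unbounded above is `0` in Lean). Then `f (c δ) = f a + (1 + δ) (g (c δ) - g a) + δ`,
so `δ ↦ g (c δ)` is strictly increasing with zero left derivative everywhere. This is impossible:
either such a function is continuous on a subinterval, hence constant there, or its jumps are
dense and, by Baire, some point is approached from the left by arbitrarily close jumps that are
steeper than slope `1`.
-/

open Filter Topology Set

theorem UpperSemicontinuousOn.le_of_tendsto {α ι γ : Type*} [TopologicalSpace α]
    [LinearOrder γ] [DenselyOrdered γ] [TopologicalSpace γ] [OrderTopology γ]
    {f : α → γ} {s : Set α} {x : α} (hf : UpperSemicontinuousOn f s) (hx : x ∈ s)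
    {l : Filter ι} [l.NeBot] {u : ι → α} {φ : ι → γ} {y : γ}
    (hu : Tendsto u l (𝓝[s] x)) (hφ : Tendsto φ l (𝓝 y)) (hle : ∀ᶠ i in l, φ i ≤ f (u i)) :
    y ≤ f x := by
  refine le_of_forall_gt_imp_ge_of_dense fun z hz => _root_.le_of_tendsto hφ ?_
  filter_upwards [hle, hu.eventually (hf x hx z hz)] with i hi hiz
  exact hi.trans hiz.le

theorem Filter.tendsto_atTop_of_liminf_le_of_eventually_ge {ι : Type*} {l : Filter ι}
    {u : ι → ℝ} {a b : ℝ} (hlim : liminf u l ≤ a) (hab : a < b) (hb : ∀ᶠ i in l, b ≤ u i) :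
    Tendsto u l atTop := by
  have hunbdd : ¬ BddAbove {c | ∀ᶠ i in l, c ≤ u i} := fun hbdd =>
    (hab.trans_le ((le_csSup hbdd hb).trans_eq liminf_eq.symm)).not_ge hlim
  refine tendsto_atTop.2 fun M => ?_
  obtain ⟨c, hc, hMc⟩ := not_bddAbove_iff.1 hunbdd M
  exact hc.mono fun i hi => hMc.le.trans hi

theorem accPt_of_nhdsWithin_neBot {X : Type*} [TopologicalSpace X] {x : X} {s C : Set X}
    (hs : (𝓝[s] x).NeBot) (hsC : s ⊆ C \ {x}) : AccPt x (𝓟 C) :=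
  accPt_principal_iff_nhdsWithin.2 (hs.mono (nhdsWithin_mono x hsC))

theorem eq_of_continuousOn_of_hasDerivWithinAt_Iio_zero {σ : ℝ → ℝ} {α β : ℝ} (hαβ : α ≤ β)
    (hcont : ContinuousOn σ (Icc α β)) (hderiv : ∀ x ∈ Ioc α β, HasDerivWithinAt σ 0 (Iio x) x) :
    σ β = σ α := by
  have hmaps : MapsTo (fun x : ℝ => -x) (Icc (-β) (-α)) (Icc α β) := fun x hx =>
    ⟨le_neg.2 hx.2, neg_le.2 hx.1⟩
  have := constant_of_has_deriv_right_zero (hcont.comp continuous_neg.continuousOn hmaps)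
    (fun x hx => by
      simpa using (hasDerivWithinAt_Iio_iff_Iic.1
        (hderiv (-x) ⟨lt_neg.2 hx.2, neg_le.1 hx.1⟩)).scomp x (hasDerivAt_neg x).hasDerivWithinAt
          fun y hy => neg_le_neg (mem_Ici.1 hy))
    (-α) ⟨neg_le_neg hαβ, le_rfl⟩
  simpa using this.symm

theorem exists_not_hasDerivWithinAt_Iio_zero_of_dense_jumps {σ : ℝ → ℝ} {u v : ℝ} (huv : u < v)
    (hjump : ∀ p q, u ≤ p → p < q → q ≤ v →
      ∃ y ∈ Ico p q, ∃ ε > 0, ∀ z ∈ Ioc y q, σ y + ε ≤ σ z) :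
    ∃ x ∈ Ioo u v, ¬ HasDerivWithinAt σ 0 (Iio x) x := by
  -- `O n`: points less than `1 / (n + 1)` to the right of a jump exceeding their distance to it
  set O : ℕ → Set ℝ := fun n => ⋃ (y) (q) (ε) (_ : u ≤ y ∧ y < q ∧ q ≤ v ∧
    ∀ z ∈ Ioc y q, σ y + ε ≤ σ z), Ioo y (min (min q (y + ε)) (y + 1 / (n + 1)))
  have hO : ∀ n, IsOpen (O n ∪ (Icc u v)ᶜ) := fun n =>
    (isOpen_iUnion fun _ => isOpen_iUnion fun _ => isOpen_iUnion fun _ =>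
      isOpen_iUnion fun _ => isOpen_Ioo).union isClosed_Icc.isOpen_compl
  have hdense : ∀ n, Dense (O n ∪ (Icc u v)ᶜ) := by
    intro n
    refine dense_iff_inter_open.2 fun V hV ⟨x, hxV⟩ => ?_
    by_cases hx : x ∈ Icc u v
    · obtain ⟨l, r, hxlr, hlrV⟩ := mem_nhds_iff_exists_Ioo_subset.1 (hV.mem_nhds hxV)
      have hlr : max l u < min r v := max_lt (lt_min (hxlr.1.trans hxlr.2) (hxlr.1.trans_le hx.2))
        (lt_min (hx.1.trans_lt hxlr.2) huv)
      obtain ⟨y, hy, ε, hε, hyε⟩ := hjump _ _ (le_max_right _ _) hlr (min_le_right _ _)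
      set m := min (min (min r v) (y + ε)) (y + 1 / (n + 1))
      have hn : (0 : ℝ) < 1 / (n + 1) := by positivity
      have hym : y < m := lt_min (lt_min hy.2 (by linarith)) (by linarith)
      have hmq : m ≤ min r v := (min_le_left _ _).trans (min_le_left _ _)
      refine ⟨(y + m) / 2, hlrV ⟨?_, ?_⟩, Or.inl ?_⟩
      · linarith [le_max_left l u, hy.1]
      · linarith [min_le_left r v]
      · simp only [O, mem_iUnion]
        exact ⟨y, min r v, ε, ⟨(le_max_right _ _).trans hy.1, hy.2, min_le_right _ _, hyε⟩,
          by linarith, by linarith⟩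
    · exact ⟨x, hxV, Or.inr hx⟩
  obtain ⟨x, hx, hxO⟩ := (dense_iInter_of_isOpen_nat hO hdense).inter_open_nonempty _ isOpen_Ioo
    (nonempty_Ioo.2 huv)
  refine ⟨x, hx, fun hderiv => ?_⟩
  obtain ⟨l, hl, hlx⟩ := mem_nhdsLT_iff_exists_Ioo_subset.1
    (((hasDerivWithinAt_iff_tendsto_slope' self_notMem_Iio).1 hderiv).eventually
      (gt_mem_nhds one_pos))
  obtain ⟨n, hn⟩ := exists_nat_one_div_lt (sub_pos.2 (mem_Iio.1 hl))
  have hxn := (mem_iInter.1 hxO n).resolve_right (not_not.2 (Ioo_subset_Icc_self hx))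
  simp only [O, mem_iUnion, mem_Ioo, lt_min_iff] at hxn
  obtain ⟨y, q, ε, ⟨-, -, -, hyε⟩, hyx, ⟨hxq, hxε⟩, hxn⟩ := hxn
  have hslope : slope σ x y < 1 := hlx ⟨by linarith, hyx⟩
  rw [slope_comm, slope_def_field, div_lt_one (sub_pos.2 hyx)] at hslope
  linarith [hyε x ⟨hyx, hxq.le⟩]

theorem StrictMonoOn.exists_not_hasDerivWithinAt_Iio_zero {σ : ℝ → ℝ} {u v : ℝ} (huv : u < v)
    (hσ : StrictMonoOn σ (Icc u v)) : ∃ x ∈ Ioc u v, ¬ HasDerivWithinAt σ 0 (Iio x) x := by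
  by_contra! hderiv
  by_cases hjump : ∀ p q, u ≤ p → p < q → q ≤ v →
      ∃ y ∈ Ico p q, ∃ ε > 0, ∀ z ∈ Ioc y q, σ y + ε ≤ σ z
  · obtain ⟨x, hx, hnd⟩ := exists_not_hasDerivWithinAt_Iio_zero_of_dense_jumps huv hjump
    exact hnd (hderiv x (Ioo_subset_Ioc_self hx))
  push Not at hjump
  obtain ⟨p, q, hup, hpq, hqv, hcont⟩ := hjump
  have hσpq : StrictMonoOn σ (Icc p q) := hσ.mono (Icc_subset_Icc hup hqv)
  have hright : ∀ y ∈ Ico p q, ContinuousWithinAt σ (Ici y) y := fun y hy =>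
    (hσpq.mono (Icc_subset_Icc_left hy.1)).continuousWithinAt_right_of_exists_between
      (Icc_mem_nhdsGE hy.2) fun b hb => by
        obtain ⟨z, hz, hzb⟩ := hcont y hy (b - σ y) (sub_pos.2 hb)
        exact ⟨z, Ioc_subset_Icc_self hz, hσpq ⟨hy.1, hy.2.le⟩ ⟨hy.1.trans hz.1.le, hz.2⟩ hz.1,
          by linarith⟩
  have hleft : ∀ y ∈ Ioc p q, ContinuousWithinAt σ (Iic y) y := fun y hy =>
    continuousWithinAt_Iio_iff_Iic.1
      (hderiv y ⟨hup.trans_lt hy.1, hy.2.trans hqv⟩).continuousWithinAt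
  have hcontOn : ContinuousOn σ (Icc p q) := by
    intro y ⟨hpy, hyq⟩
    rcases hyq.eq_or_lt with rfl | hyq
    · exact (hleft _ ⟨hpq, le_rfl⟩).mono Icc_subset_Iic_self
    rcases hpy.eq_or_lt with rfl | hpy
    · exact (hright _ ⟨le_rfl, hyq⟩).mono Icc_subset_Ici_self
    · exact ((hleft _ ⟨hpy, hyq.le⟩).union (hright _ ⟨hpy.le, hyq⟩)).mono
        (by rw [Iic_union_Ici]; exact subset_univ _)
  have := eq_of_continuousOn_of_hasDerivWithinAt_Iio_zero hpq.le hcontOn fun x hx =>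
    hderiv x ⟨hup.trans_lt hx.1, hx.2.trans hqv⟩
  exact (hσpq ⟨le_rfl, hpq.le⟩ ⟨hpq.le, le_rfl⟩ hpq).ne this.symm

section Holes

variable {E : Set ℝ}

theorem exists_hole_left (hE : IsClosed E) {s t : ℝ} (hs : s ∈ E) (hst : s < t)
    (ht : ¬ (𝓝[E ∩ Iio t] t).NeBot) : ∃ x ∈ E, s ≤ x ∧ x < t ∧ Ioo x t ∩ E = ∅ := by
  set S := E ∩ Ico s t
  have hSne : S.Nonempty := ⟨s, hs, le_rfl, hst⟩
  have hSbdd : BddAbove S := ⟨t, fun y hy => hy.2.2.le⟩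
  have hcl : sSup S ∈ E ∩ Icc s t :=
    closure_minimal (inter_subset_inter_right _ Ico_subset_Icc_self) (hE.inter isClosed_Icc)
      (csSup_mem_closure hSne hSbdd)
  have hlt : sSup S < t := by
    refine hcl.2.2.lt_of_ne fun heq => ht ?_
    have := closure_mono (inter_subset_inter_right E fun y (hy : y ∈ Ico s t) => hy.2)
      (csSup_mem_closure hSne hSbdd)
    rwa [heq, mem_closure_iff_nhdsWithin_neBot] at this
  refine ⟨sSup S, hcl.1, hcl.2.1, hlt, eq_empty_of_forall_notMem fun y ⟨hy, hyE⟩ => ?_⟩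
  exact (le_csSup hSbdd ⟨hyE, hcl.2.1.trans hy.1.le, hy.2⟩).not_gt hy.1

theorem exists_hole_right (hE : IsClosed E) {x t : ℝ} (ht : t ∈ E) (hxt : x < t)
    (hx : ¬ (𝓝[E ∩ Ioi x] x).NeBot) : ∃ y ∈ E, x < y ∧ y ≤ t ∧ Ioo x y ∩ E = ∅ := by
  set S := E ∩ Ioc x t
  have hSne : S.Nonempty := ⟨t, ht, hxt, le_rfl⟩
  have hSbdd : BddBelow S := ⟨x, fun y hy => hy.2.1.le⟩
  have hcl : sInf S ∈ E ∩ Icc x t :=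
    closure_minimal (inter_subset_inter_right _ Ioc_subset_Icc_self) (hE.inter isClosed_Icc)
      (csInf_mem_closure hSne hSbdd)
  have hlt : x < sInf S := by
    refine hcl.2.1.lt_of_ne' fun heq => hx ?_
    have := closure_mono (inter_subset_inter_right E fun y (hy : y ∈ Ioc x t) => hy.1)
      (csInf_mem_closure hSne hSbdd)
    rwa [heq, mem_closure_iff_nhdsWithin_neBot] at this
  refine ⟨sInf S, hcl.1, hlt, hcl.2.2, eq_empty_of_forall_notMem fun y ⟨hy, hyE⟩ => ?_⟩
  exact (csInf_le hSbdd ⟨hyE, hy.1, hy.2.le.trans hcl.2.2⟩).not_gt hy.2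

variable {h : ℝ → ℝ}

theorem le_of_forall_hole_right (hE : IsClosed E)
    (hleft : ∀ t ∈ E, ContinuousWithinAt h (E ∩ Iio t) t)
    (hhole : ∀ a ∈ E, ∀ b ∈ E, a < b → Ioo a b ∩ E = ∅ → h b ≤ h a)
    {s t : ℝ} (hs : s ∈ E) (hst : s ≤ t)
    (hsucc : ∀ x ∈ E, s ≤ x → x < t → ∃ y ∈ E, x < y ∧ y ≤ t ∧ Ioo x y ∩ E = ∅) :
    h t ≤ h s := by
  set W := {x | x ∈ E ∧ x ∈ Icc s t ∧ h x ≤ h s}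
  have hWne : W.Nonempty := ⟨s, hs, ⟨le_rfl, hst⟩, le_rfl⟩
  have hWbdd : BddAbove W := ⟨t, fun x hx => hx.2.1.2⟩
  have hwcl : sSup W ∈ closure W := csSup_mem_closure hWne hWbdd
  have hwE : sSup W ∈ E ∩ Icc s t :=
    closure_minimal (show W ⊆ E ∩ Icc s t from fun x hx => ⟨hx.1, hx.2.1⟩)
      (hE.inter isClosed_Icc) hwcl
  have hw : h (sSup W) ≤ h s := by
    have := mem_closure_iff_nhdsWithin_neBot.1 hwcl
    have hcont : ContinuousWithinAt h W (sSup W) :=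
      (continuousWithinAt_insert_self.2 (hleft _ hwE.1)).mono fun x hx =>
        (le_csSup hWbdd hx).eq_or_lt.imp id fun hlt => ⟨hx.1, hlt⟩
    exact le_of_tendsto hcont (eventually_nhdsWithin_of_forall fun x hx => hx.2.2)
  rcases hwE.2.2.eq_or_lt with hwt | hwt
  · rwa [hwt] at hw
  · obtain ⟨y, hyE, hwy, hyt, hwyE⟩ := hsucc _ hwE.1 hwE.2.1 hwt
    have hyW : y ∈ W := ⟨hyE, ⟨hwE.2.1.trans hwy.le, hyt⟩, (hhole _ hwE.1 y hyE hwy hwyE).trans hw⟩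
    exact absurd (le_csSup hWbdd hyW) hwy.not_ge

theorem exists_le_of_not_nhdsWithin_derivedSet_Iio_neBot (hE : IsClosed E)
    (hleft : ∀ t ∈ E, ContinuousWithinAt h (E ∩ Iio t) t)
    (hhole : ∀ a ∈ E, ∀ b ∈ E, a < b → Ioo a b ∩ E = ∅ → h b ≤ h a)
    {a c : ℝ} (ha : a ∈ E) (hc : c ∈ E) (hac : a < c)
    (hcL : ¬ (𝓝[derivedSet E ∩ Iio c] c).NeBot) : ∃ s ∈ E, a ≤ s ∧ s < c ∧ h c ≤ h s := by
  by_cases hcE : (𝓝[E ∩ Iio c] c).NeBot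
  · have hnhds : (closure (derivedSet E ∩ Iio c))ᶜ ∈ 𝓝 c :=
      isClosed_closure.isOpen_compl.mem_nhds (mt mem_closure_iff_nhdsWithin_neBot.1 hcL)
    obtain ⟨l, hlc, hl⟩ := exists_Ioc_subset_of_mem_nhds hnhds ⟨a, hac⟩
    obtain ⟨s, ⟨hsE, hsc⟩, hs⟩ := hcE.nonempty_of_mem (inter_mem self_mem_nhdsWithin
      (mem_nhdsWithin_of_mem_nhds (Ioi_mem_nhds (max_lt hac hlc))))
    refine ⟨s, hsE, (le_max_left a l).trans (le_of_lt hs), hsc,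
      le_of_forall_hole_right hE hleft hhole hsE hsc.le fun x hxE hsx hxc => ?_⟩
    have hxL : x ∉ derivedSet E := fun hxL =>
      hl ⟨(le_max_right a l).trans_lt (lt_of_lt_of_le hs hsx), hxc.le⟩ (subset_closure ⟨hxL, hxc⟩)
    refine exists_hole_right hE hc hxc fun hx => hxL ?_
    exact accPt_of_nhdsWithin_neBot hx fun y hy => ⟨hy.1, hy.2.ne'⟩
  · obtain ⟨s, hsE, has, hsc, hsE'⟩ := exists_hole_left hE ha hac hcE
    exact ⟨s, hsE, has, hsc, hhole s hsE c hc hsc hsE'⟩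

end Holes

section FirstCrossing

variable {E : Set ℝ} {f g : ℝ → ℝ} {a b δ δ' : ℝ}

def crossingSet (E : Set ℝ) (f g : ℝ → ℝ) (a b δ : ℝ) : Set ℝ :=
  {t | t ∈ E ∧ t ∈ Icc a b ∧ f a + (1 + δ) * (g t - g a) + δ ≤ f t}

noncomputable def firstCrossing (E : Set ℝ) (f g : ℝ → ℝ) (a b δ : ℝ) : ℝ :=
  sInf (crossingSet E f g a b δ)

theorem bddBelow_crossingSet : BddBelow (crossingSet E f g a b δ) :=
  ⟨a, fun _ ht => ht.2.1.1⟩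

theorem firstCrossing_le {t : ℝ} (ht : t ∈ crossingSet E f g a b δ) :
    firstCrossing E f g a b δ ≤ t :=
  csInf_le bddBelow_crossingSet ht

theorem crossingSet_anti (hg : MonotoneOn g E) (ha : a ∈ E) (hδ : δ ≤ δ') :
    crossingSet E f g a b δ' ⊆ crossingSet E f g a b δ := fun t ⟨htE, htab, ht⟩ =>
  ⟨htE, htab, by nlinarith [hg ha htE htab.1]⟩

theorem firstCrossing_mono (hg : MonotoneOn g E) (ha : a ∈ E)
    (hne : (crossingSet E f g a b δ').Nonempty) (hδ : δ ≤ δ') :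
    firstCrossing E f g a b δ ≤ firstCrossing E f g a b δ' :=
  csInf_le_csInf bddBelow_crossingSet hne (crossingSet_anti hg ha hδ)

theorem firstCrossing_mem (hE : IsClosed E) (hf : UpperSemicontinuousOn f E)
    (hg : ContinuousOn g E) (hne : (crossingSet E f g a b δ).Nonempty) :
    firstCrossing E f g a b δ ∈ crossingSet E f g a b δ := by
  set c := firstCrossing E f g a b δ
  have hcl : c ∈ closure (crossingSet E f g a b δ) := csInf_mem_closure hne bddBelow_crossingSet
  have hc : c ∈ E ∩ Icc a b := closure_minimal
    (show crossingSet E f g a b δ ⊆ E ∩ Icc a b from fun _ ht => ⟨ht.1, ht.2.1⟩)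
    (hE.inter isClosed_Icc) hcl
  have := mem_closure_iff_nhdsWithin_neBot.1 hcl
  have hgc : ContinuousWithinAt g (crossingSet E f g a b δ) c := (hg c hc.1).mono fun _ ht => ht.1
  exact ⟨hc.1, hc.2, hf.le_of_tendsto hc.1 (tendsto_id'.2 (nhdsWithin_mono c fun _ ht => ht.1))
    ((((hgc.tendsto.sub_const (g a)).const_mul (1 + δ)).const_add (f a)).add_const δ)
    (eventually_nhdsWithin_of_forall fun _ ht => ht.2.2)⟩

theorem lt_firstCrossing (hδ : 0 < δ) (hc : firstCrossing E f g a b δ ∈ crossingSet E f g a b δ) :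
    a < firstCrossing E f g a b δ := by
  refine hc.2.1.1.lt_of_ne fun hac => ?_
  have := hc.2.2
  rw [← hac] at this
  linarith

theorem lt_of_lt_firstCrossing (hc : firstCrossing E f g a b δ ∈ crossingSet E f g a b δ)
    {s : ℝ} (hs : s ∈ E) (has : a ≤ s) (hsc : s < firstCrossing E f g a b δ) :
    f s < f a + (1 + δ) * (g s - g a) + δ :=
  not_le.1 fun h => (firstCrossing_le ⟨hs, ⟨has, hsc.le.trans hc.2.1.2⟩, h⟩).not_gt hsc

theorem firstCrossing_eq (hδ : 0 < δ) (hc : firstCrossing E f g a b δ ∈ crossingSet E f g a b δ)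
    (hf : ContinuousWithinAt f (E ∩ Iio (firstCrossing E f g a b δ)) (firstCrossing E f g a b δ))
    (hg : ContinuousOn g E) (hacc : (𝓝[E ∩ Iio (firstCrossing E f g a b δ)]
      (firstCrossing E f g a b δ)).NeBot) :
    f (firstCrossing E f g a b δ) =
      f a + (1 + δ) * (g (firstCrossing E f g a b δ) - g a) + δ := by
  set c := firstCrossing E f g a b δ
  refine le_antisymm ?_ hc.2.2
  have hgc : ContinuousWithinAt g (E ∩ Iio c) c := (hg c hc.1).mono inter_subset_left
  refine le_of_tendsto_of_tendsto hf
    ((((hgc.tendsto.sub_const (g a)).const_mul (1 + δ)).const_add (f a)).add_const δ) ?_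
  filter_upwards [self_mem_nhdsWithin,
    mem_nhdsWithin_of_mem_nhds (Ioi_mem_nhds (lt_firstCrossing hδ hc))] with s hs has
  exact (lt_of_lt_firstCrossing hc hs.1 (le_of_lt has) hs.2).le

theorem firstCrossing_lt (hg : MonotoneOn g E) (ha : a ∈ E)
    (hc : firstCrossing E f g a b δ ∈ crossingSet E f g a b δ)
    (heq : f (firstCrossing E f g a b δ) =
      f a + (1 + δ) * (g (firstCrossing E f g a b δ) - g a) + δ)
    (hc' : firstCrossing E f g a b δ' ∈ crossingSet E f g a b δ') (hδ : δ < δ') :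
    firstCrossing E f g a b δ < firstCrossing E f g a b δ' := by
  refine (firstCrossing_mono hg ha ⟨_, hc'⟩ hδ.le).lt_of_ne fun hcc => ?_
  have h' := hc'.2.2
  rw [← hcc] at h'
  nlinarith [hg ha hc.1 hc.2.1.1]

theorem tendsto_firstCrossing_nhdsLT (hE : IsClosed E) (hf : UpperSemicontinuousOn f E)
    (hg : ContinuousOn g E) (hgm : MonotoneOn g E) (ha : a ∈ E)
    (hne : (crossingSet E f g a b δ).Nonempty) :
    Tendsto (firstCrossing E f g a b) (𝓝[<] δ) (𝓝 (firstCrossing E f g a b δ)) := by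
  set c := firstCrossing E f g a b
  have hmem : ∀ x < δ, c x ∈ crossingSet E f g a b x := fun x hx =>
    firstCrossing_mem hE hf hg (hne.mono (crossingSet_anti hgm ha hx.le))
  have hmono : MonotoneOn c (Iio δ) := fun x _ y hy hxy =>
    firstCrossing_mono hgm ha ⟨_, hmem y hy⟩ hxy
  have hbdd : BddAbove (c '' Iio δ) :=
    ⟨c δ, forall_mem_image.2 fun x hx => firstCrossing_mono hgm ha hne (le_of_lt hx)⟩
  have hlim := hmono.tendsto_nhdsLT hbdd
  set ĉ := sSup (c '' Iio δ)
  have hĉ : ĉ ∈ E ∩ Icc a b := (hE.inter isClosed_Icc).mem_of_tendsto hlim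
    (eventually_nhdsWithin_of_forall fun x hx => ⟨(hmem x hx).1, (hmem x hx).2.1⟩)
  have hlimE : Tendsto c (𝓝[<] δ) (𝓝[E] ĉ) :=
    tendsto_nhdsWithin_iff.2 ⟨hlim, eventually_nhdsWithin_of_forall fun x hx => (hmem x hx).1⟩
  have hδ : Tendsto (fun x : ℝ => x) (𝓝[<] δ) (𝓝 δ) := tendsto_nhdsWithin_of_tendsto_nhds tendsto_id
  have hĉS : ĉ ∈ crossingSet E f g a b δ := ⟨hĉ.1, hĉ.2, hf.le_of_tendsto hĉ.1 hlimE
    ((tendsto_const_nhds.add ((tendsto_const_nhds.add hδ).mul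
      (((hg ĉ hĉ.1).tendsto.comp hlimE).sub_const (g a)))).add hδ)
    (eventually_nhdsWithin_of_forall fun x hx => (hmem x hx).2.2)⟩
  have hĉc : ĉ ≤ c δ := csSup_le (nonempty_Iio.image c) (forall_mem_image.2 fun x hx =>
    firstCrossing_mono hgm ha hne (le_of_lt hx))
  rwa [le_antisymm hĉc (firstCrossing_le hĉS)] at hlim

end FirstCrossing

section Contradiction

variable {E : Set ℝ} {f g : ℝ → ℝ} {a b δ : ℝ}

theorem nhdsWithin_derivedSet_Iio_firstCrossing_neBot (hE : IsClosed E)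
    (hleft : ∀ t ∈ E, ContinuousWithinAt f (E ∩ Iio t) t) (hg : ContinuousOn g E)
    (hgm : MonotoneOn g E)
    (hhole : ∀ a ∈ E, ∀ b ∈ E, a < b → Ioo a b ∩ E = ∅ → f b - f a ≤ g b - g a)
    (ha : a ∈ E) (hδ : 0 < δ) (hc : firstCrossing E f g a b δ ∈ crossingSet E f g a b δ) :
    (𝓝[derivedSet E ∩ Iio (firstCrossing E f g a b δ)] (firstCrossing E f g a b δ)).NeBot := by
  by_contra hnacc
  obtain ⟨s, hs, has, hsc, hsub⟩ := exists_le_of_not_nhdsWithin_derivedSet_Iio_neBot (h := f - g)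
    hE (fun t ht => (hleft t ht).sub ((hg t ht).mono inter_subset_left))
    (fun a ha b hb hab hgap => by simp only [Pi.sub_apply]; linarith [hhole a ha b hb hab hgap])
    ha hc.1 (lt_firstCrossing hδ hc) hnacc
  have hfs := lt_of_lt_firstCrossing hc hs has hsc
  have hfc := hc.2.2
  simp only [Pi.sub_apply] at hsub
  nlinarith [hgm hs hc.1 hsc.le]

theorem tendsto_div_firstCrossing_atTop {L : Set ℝ} (hLE : L ⊆ E) (hgm : StrictMonoOn g E)
    (hδ : 0 < δ) (hc : firstCrossing E f g a b δ ∈ crossingSet E f g a b δ)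
    (hlim : liminf (fun s => (f (firstCrossing E f g a b δ) - f s) /
        (g (firstCrossing E f g a b δ) - g s))
      (𝓝[L ∩ Iio (firstCrossing E f g a b δ)] (firstCrossing E f g a b δ)) ≤ 1) :
    Tendsto (fun s => (f (firstCrossing E f g a b δ) - f s) /
        (g (firstCrossing E f g a b δ) - g s))
      (𝓝[L ∩ Iio (firstCrossing E f g a b δ)] (firstCrossing E f g a b δ)) atTop := by
  -- the quotient stays `≥ 1 + δ`, so `liminf ≤ 1` can only hold through the junk value `0`
  refine tendsto_atTop_of_liminf_le_of_eventually_ge hlim (lt_add_of_pos_right 1 hδ) ?_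
  filter_upwards [self_mem_nhdsWithin,
    mem_nhdsWithin_of_mem_nhds (Ioi_mem_nhds (lt_firstCrossing hδ hc))] with s hs has
  rw [le_div_iff₀ (sub_pos.2 (hgm (hLE hs.1) hc.1 hs.2))]
  linarith [lt_of_lt_firstCrossing hc (hLE hs.1) (le_of_lt has) hs.2, hc.2.2]

theorem strictMonoOn_firstCrossing (hgm : MonotoneOn g E) (ha : a ∈ E) {s : Set ℝ}
    (hc : ∀ δ ∈ s, firstCrossing E f g a b δ ∈ crossingSet E f g a b δ)
    (heq : ∀ δ ∈ s, f (firstCrossing E f g a b δ) =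
      f a + (1 + δ) * (g (firstCrossing E f g a b δ) - g a) + δ) :
    StrictMonoOn (firstCrossing E f g a b) s := fun x hx y hy hxy =>
  firstCrossing_lt hgm ha (hc x hx) (heq x hx) (hc y hy) hxy

theorem hasDerivWithinAt_comp_firstCrossing (hE : IsClosed E) (hf : UpperSemicontinuousOn f E)
    (hg : ContinuousOn g E) (hgm : StrictMonoOn g E) (ha : a ∈ E) {L : Set ℝ} {δ₀ : ℝ}
    (hc : ∀ x ∈ Ioc 0 δ₀, firstCrossing E f g a b x ∈ crossingSet E f g a b x)
    (heq : ∀ x ∈ Ioc 0 δ₀, f (firstCrossing E f g a b x) =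
      f a + (1 + x) * (g (firstCrossing E f g a b x) - g a) + x)
    (hL : ∀ x ∈ Ioc 0 δ₀, firstCrossing E f g a b x ∈ L) (hδ : δ ∈ Ioc 0 δ₀)
    (htop : Tendsto (fun s => (f (firstCrossing E f g a b δ) - f s) /
        (g (firstCrossing E f g a b δ) - g s))
      (𝓝[L ∩ Iio (firstCrossing E f g a b δ)] (firstCrossing E f g a b δ)) atTop) :
    HasDerivWithinAt (g ∘ firstCrossing E f g a b) 0 (Iio δ) δ := by
  set c := firstCrossing E f g a b
  have hmono := strictMonoOn_firstCrossing hgm.monotoneOn ha hc heq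
  have hev : ∀ᶠ x in 𝓝[<] δ, x ∈ Ioo 0 δ := Ioo_mem_nhdsLT hδ.1
  have hcL : Tendsto c (𝓝[<] δ) (𝓝[L ∩ Iio (c δ)] (c δ)) := tendsto_nhdsWithin_iff.2
    ⟨tendsto_firstCrossing_nhdsLT hE hf hg hgm.monotoneOn ha ⟨_, hc δ hδ⟩,
      hev.mono fun x hx => ⟨hL x ⟨hx.1, hx.2.le.trans hδ.2⟩,
        hmono ⟨hx.1, hx.2.le.trans hδ.2⟩ hδ hx.2⟩⟩
  have hcE : Tendsto c (𝓝[<] δ) (𝓝[E] (c δ)) := tendsto_nhdsWithin_iff.2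
    ⟨tendsto_nhds_of_tendsto_nhdsWithin hcL,
      hev.mono fun x hx => (hc x ⟨hx.1, hx.2.le.trans hδ.2⟩).1⟩
  have hnum : Tendsto (fun x => g (c x) - g a + 1) (𝓝[<] δ) (𝓝 (g (c δ) - g a + 1)) :=
    (((hg _ (hc δ hδ).1).tendsto.comp hcE).sub_const _).add_const _
  rw [hasDerivWithinAt_iff_tendsto_slope' self_notMem_Iio]
  refine (hnum.div_atTop (tendsto_atTop_add_const_right _ (-(1 + δ)) (htop.comp hcL))).congr'
    (hev.mono fun x hx => ?_)
  have hx' : x ∈ Ioc 0 δ₀ := ⟨hx.1, hx.2.le.trans hδ.2⟩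
  have hD : 0 < g (c δ) - g (c x) := sub_pos.2 (hgm (hc x hx').1 (hc δ hδ).1 (hmono hx' hδ hx.2))
  have hM : 0 < g (c x) - g a + 1 := by
    linarith [hgm.monotoneOn ha (hc x hx').1 (hc x hx').2.1.1]
  have hd : 0 < δ - x := sub_pos.2 hx.2
  have hxδ : x - δ ≠ 0 := by linarith
  have hfx : f (c δ) - f (c x) =
      (1 + δ) * (g (c δ) - g (c x)) + (δ - x) * (g (c x) - g a + 1) := by
    rw [heq δ hδ, heq x hx']
    ring
  simp only [Function.comp, slope_def_field, hfx]
  field_simp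
  ring

theorem sub_le_sub_of_lt (hE : IsClosed E) (hf : UpperSemicontinuousOn f E)
    (hleft : ∀ t ∈ E, ContinuousWithinAt f (E ∩ Iio t) t)
    (hg : ContinuousOn g E) (hgm : StrictMonoOn g E)
    (hhole : ∀ a ∈ E, ∀ b ∈ E, a < b → Ioo a b ∩ E = ∅ → f b - f a ≤ g b - g a)
    (hlim : ∀ t ∈ derivedSet E, (𝓝[derivedSet E ∩ Iio t] t).NeBot →
      liminf (fun s => (f t - f s) / (g t - g s)) (𝓝[derivedSet E ∩ Iio t] t) ≤ 1)
    (ha : a ∈ E) (hb : b ∈ E) (hab : a < b) : f b - f a ≤ g b - g a := by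
  by_contra! hfg
  have hLE : derivedSet E ⊆ E := (isClosed_iff_derivedSet_subset E).1 hE
  set δ₀ := (f b - f a - (g b - g a)) / (g b - g a + 1)
  have hδ₀ : 0 < δ₀ := div_pos (by linarith) (by linarith [hgm ha hb hab])
  set c := firstCrossing E f g a b
  have hc : ∀ δ ∈ Ioc 0 δ₀, c δ ∈ crossingSet E f g a b δ := fun δ hδ =>
    firstCrossing_mem hE hf hg ⟨b, hb, ⟨hab.le, le_rfl⟩, by
      linarith [(le_div_iff₀ (by linarith [hgm ha hb hab] : 0 < g b - g a + 1)).1 hδ.2]⟩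
  have hacc : ∀ δ ∈ Ioc 0 δ₀, (𝓝[derivedSet E ∩ Iio (c δ)] (c δ)).NeBot := fun δ hδ =>
    nhdsWithin_derivedSet_Iio_firstCrossing_neBot hE hleft hg hgm.monotoneOn hhole ha hδ.1
      (hc δ hδ)
  have hL : ∀ δ ∈ Ioc 0 δ₀, c δ ∈ derivedSet E := fun δ hδ =>
    accPt_of_nhdsWithin_neBot (hacc δ hδ) fun _ hy => ⟨hLE hy.1, hy.2.ne⟩
  have heq : ∀ δ ∈ Ioc 0 δ₀, f (c δ) = f a + (1 + δ) * (g (c δ) - g a) + δ := fun δ hδ =>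
    firstCrossing_eq hδ.1 (hc δ hδ) (hleft _ (hc δ hδ).1) hg
      ((hacc δ hδ).mono (nhdsWithin_mono _ (inter_subset_inter_left _ hLE)))
  have hderiv : ∀ δ ∈ Ioc 0 δ₀, HasDerivWithinAt (g ∘ c) 0 (Iio δ) δ := fun δ hδ =>
    hasDerivWithinAt_comp_firstCrossing hE hf hg hgm ha hc heq hL hδ
      (tendsto_div_firstCrossing_atTop hLE hgm hδ.1 (hc δ hδ) (hlim _ (hL δ hδ) (hacc δ hδ)))
  have hσ : StrictMonoOn (g ∘ c) (Icc (δ₀ / 2) δ₀) := fun x hx y hy hxy =>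
    have hx' : x ∈ Ioc 0 δ₀ := ⟨(half_pos hδ₀).trans_le hx.1, hx.2⟩
    have hy' : y ∈ Ioc 0 δ₀ := ⟨(half_pos hδ₀).trans_le hy.1, hy.2⟩
    hgm (hc x hx').1 (hc y hy').1 (strictMonoOn_firstCrossing hgm.monotoneOn ha hc heq hx' hy' hxy)
  obtain ⟨δ, hδ, hnd⟩ := hσ.exists_not_hasDerivWithinAt_Iio_zero (half_lt_self hδ₀)
  exact hnd (hderiv δ ⟨(half_pos hδ₀).trans hδ.1, hδ.2⟩)

end Contradiction

theorem stmt1_general (E : Set ℝ) (hE : IsCompact E) (hne : E.Nonempty)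
    (f g : ℝ → ℝ)
    (husc : UpperSemicontinuousOn f E)
    (hleft : ∀ t ∈ E, Tendsto f (𝓝[E ∩ Iio t] t) (𝓝 (f t)))
    (hg : ContinuousOn g E) (hgmono : StrictMonoOn g E)
    (L : Set ℝ) (hL : L = {x | AccPt x (𝓟 E)})
    (hi : ∀ a ∈ E, ∀ b ∈ E, a < b → Ioo a b ∩ E = ∅ →
      (f b - f a) / (g b - g a) ≤ 1)
    (hii : ∀ t ∈ L, (𝓝[L ∩ Iio t] t).NeBot →
      Filter.liminf (fun s => (f t - f s) / (g t - g s)) (𝓝[L ∩ Iio t] t) ≤ 1) :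
    (∀ s ∈ E, ∀ t ∈ E, s ≤ t → f t - g t ≤ f s - g s) ∧
      f (sSup E) - f (sInf E) ≤ g (sSup E) - g (sInf E) := by
  subst hL
  have hhole : ∀ a ∈ E, ∀ b ∈ E, a < b → Ioo a b ∩ E = ∅ → f b - f a ≤ g b - g a :=
    fun a ha b hb hab hgap => (div_le_one (sub_pos.2 (hgmono ha hb hab))).1 (hi a ha b hb hab hgap)
  have hanti : ∀ s ∈ E, ∀ t ∈ E, s ≤ t → f t - g t ≤ f s - g s := by
    intro s hs t ht hst
    rcases hst.eq_or_lt with rfl | hst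
    · exact le_rfl
    · linarith [sub_le_sub_of_lt hE.isClosed husc hleft hg hgmono hhole hii hs ht hst]
  refine ⟨hanti, ?_⟩
  linarith [hanti _ (hE.sInf_mem hne) _ (hE.sSup_mem hne)
    (csInf_le_csSup hne hE.bddBelow hE.bddAbove)]

/-- comparison lemma on a compact set `E ⊂ ℝ`. If `f` is u.s.c. and
left-continuous on `E`, `g` is continuous and strictly increasing on `E`,
the difference quotient over each hole of `E` is `≤ 1`, and the left liminf of the
difference quotient along limit points of `E` is `≤ 1`, then `f - g` is
nonincreasing on `E`. -/
theorem stmt1 (E : Set ℝ) (hE : IsCompact E) (hne : E.Nonempty)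
    (hlt : sInf E < sSup E)
    (f g : ℝ → ℝ)
    (husc : UpperSemicontinuousOn f E)
    (hleft : ∀ t ∈ E, Tendsto f (𝓝[E ∩ Iio t] t) (𝓝 (f t)))
    (hg : ContinuousOn g E) (hgmono : StrictMonoOn g E)
    (L : Set ℝ) (hL : L = {x | AccPt x (𝓟 E)})
    (hi : ∀ a ∈ E, ∀ b ∈ E, a < b → Ioo a b ∩ E = ∅ →
      (f b - f a) / (g b - g a) ≤ 1)
    (hii : ∀ t ∈ L, (𝓝[L ∩ Iio t] t).NeBot →
      Filter.liminf (fun s => (f t - f s) / (g t - g s)) (𝓝[L ∩ Iio t] t) ≤ 1) :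
    (∀ s ∈ E, ∀ t ∈ E, s ≤ t → f t - g t ≤ f s - g s) ∧
      f (sSup E) - f (sInf E) ≤ g (sSup E) - g (sInf E) :=
  stmt1_general E hE hne f g husc hleft hg hgmono L hL hi hii
end

section
/- Let γ > 0 and let (a_n), (b_n) be sequences of nonnegative reals satisfying (1+γ)² a_n² ≤ a_{n−1}² + b_n a_n for all n ≥ 1. Then for every k ∈ ℕ, ∑_{n=1}^k a_n ≤ (1/γ)(a_0 + ∑_{n=1}^k b_n). -/
/-!
For nonnegative `x, y, b` and `c ≥ 1`, `c²x² ≤ y² + bx` forces `cx ≤ y + b`: otherwise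
`c²x² > (y + b)·cx ≥ y² + bx`. With `c = 1 + γ` this linearises the hypothesis to
`γ aₙ ≤ (aₙ₋₁ - aₙ) + bₙ`, which telescopes to `γ ∑ aₙ + a_k ≤ a₀ + ∑ bₙ`.
-/

open Finset

lemma mul_le_add_of_sq_mul_sq_le {c x y b : ℝ} (hc : 1 ≤ c) (hx : 0 ≤ x) (hy : 0 ≤ y) (hb : 0 ≤ b)
    (h : c ^ 2 * x ^ 2 ≤ y ^ 2 + b * x) : c * x ≤ y + b := by
  by_contra! hlt
  have hy' : y * y ≤ y * (c * x) := mul_le_mul_of_nonneg_left (by linarith) hy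
  have hb' : b * x ≤ b * (c * x) := mul_le_mul_of_nonneg_left (le_mul_of_one_le_left hx hc) hb
  have : (y + b) * (c * x) < c * x * (c * x) := mul_lt_mul_of_pos_right hlt (by linarith)
  nlinarith

lemma mul_sum_Icc_add_le_of_mul_succ_le (γ : ℝ) {a b : ℕ → ℝ}
    (h : ∀ n, (1 + γ) * a (n + 1) ≤ a n + b (n + 1)) (k : ℕ) :
    γ * ∑ n ∈ Icc 1 k, a n + a k ≤ a 0 + ∑ n ∈ Icc 1 k, b n := by
  induction k with
  | zero => simp
  | succ k ih =>
    rw [sum_Icc_succ_top (by omega), sum_Icc_succ_top (by omega)]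
    linarith [h k]

/-- a discrete Gronwall-type lemma for nonnegative sequences. -/
theorem stmt3 (γ : ℝ) (hγ : 0 < γ) (a b : ℕ → ℝ)
    (ha : ∀ n, 0 ≤ a n) (hb : ∀ n, 0 ≤ b n)
    (hrec : ∀ n : ℕ, 1 ≤ n → (1 + γ)^2 * (a n)^2 ≤ (a (n - 1))^2 + b n * a n) :
    ∀ k : ℕ, ∑ n ∈ Finset.Icc 1 k, a n ≤ (1 / γ) * (a 0 + ∑ n ∈ Finset.Icc 1 k, b n) := by
  have step (n : ℕ) : (1 + γ) * a (n + 1) ≤ a n + b (n + 1) :=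
    mul_le_add_of_sq_mul_sq_le (by linarith) (ha _) (ha n) (hb _) (hrec (n + 1) n.succ_pos)
  intro k
  have htele := mul_sum_Icc_add_le_of_mul_succ_le γ step k
  rw [one_div_mul_eq_div, le_div_iff₀' hγ]
  linarith [ha k]
end

section
/- Let X be a convex subset of a vector space V, ψ: V → [0,∞) convex and positively 1-homogeneous, d(x,y) := ψ(y−x), and suppose x ↦ ℰ(t,x) is convex on X. If δ: X×X → [0,∞] satisfies lim_{θ↓0} δ(u, (1−θ)u + θv)/θ = 0 for every u, v ∈ X, then the D-stable set coincides with the d-stable set: a point u satisfies ℰ(t,u) ≤ ℰ(t,v) + ψ(v−u) + δ(u,v) for all v ∈ X if and only if ℰ(t,u) ≤ ℰ(t,v) + ψ(v−u) for all v ∈ X. -/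
open Set Filter Topology

/-- in the convex setting with `d(x,y) = ψ(y - x)` for a convex,
positively 1-homogeneous `ψ`, and a viscous correction `δ` vanishing at first order
along segments, the `D`-stable set coincides with the `d`-stable set. -/
theorem stmt8 {V : Type*} [AddCommGroup V] [Module ℝ V]
    (X : Set V) (hX : Convex ℝ X)
    (ψ : V → ℝ) (hψnn : ∀ v, 0 ≤ ψ v) (hψconv : ConvexOn ℝ Set.univ ψ)
    (hψhom : ∀ c : ℝ, 0 ≤ c → ∀ v, ψ (c • v) = c * ψ v)
    (E : ℝ → V → ℝ) (hEconv : ∀ t, ConvexOn ℝ X (E t))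
    (δ : V → V → ℝ) (hδnn : ∀ u v, 0 ≤ δ u v)
    (hδ : ∀ u ∈ X, ∀ v ∈ X,
      Tendsto (fun θ : ℝ => δ u ((1 - θ) • u + θ • v) / θ) (𝓝[>] 0) (𝓝 0)) :
    ∀ t : ℝ, ∀ u ∈ X,
      ((∀ v ∈ X, E t u ≤ E t v + ψ (v - u) + δ u v) ↔
        (∀ v ∈ X, E t u ≤ E t v + ψ (v - u))) := by
  intro t u hu
  constructor
  · intro h v hv
    have key : E t u - (E t v + ψ (v - u)) ≤ 0 := by
      refine ge_of_tendsto (hδ u hu v hv) ?_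
      filter_upwards [Ioo_mem_nhdsGT_of_mem (by norm_num : (0:ℝ) ∈ Ico 0 1)]
        with θ hθ
      obtain ⟨hθ0, hθ1⟩ := hθ
      set w := (1 - θ) • u + θ • v with hw
      have hwX : w ∈ X := hX hu hv (by linarith) hθ0.le (by ring)
      have hwu : w - u = θ • (v - u) := by
        simp [hw, smul_sub, sub_smul]; abel
      have hψw : ψ (w - u) = θ * ψ (v - u) := by rw [hwu, hψhom θ hθ0.le]
      have hEw : E t w ≤ (1 - θ) * E t u + θ * E t v :=
        (hEconv t).2 hu hv (by linarith) hθ0.le (by ring)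
      have h1 := h w hwX
      rw [le_div_iff₀ hθ0]
      nlinarith
    linarith
  · intro h v hv
    have := h v hv
    have := hδnn u v
    linarith
end

section
/- Let X be a convex subset of a vector space V, ψ: V → [0,∞) convex positively 1-homogeneous, ℰ(t,·): X → ℝ convex. Suppose u₋ satisfies the stability condition ℰ(t,u₋) ≤ ℰ(t,v) + ψ(v − u₋) for all v ∈ X, and u₊ ∈ X satisfies ℰ(t,u₊) + ψ(u₊ − u₋) = ℰ(t,u₋). Then every point on the segment θ(s) := (1−s)u₋ + s u₊, s ∈ [0,1], is stable: ℰ(t,θ(s)) ≤ ℰ(t,v) + ψ(v − θ(s)) for all v ∈ X, and ℰ(t,θ(s)) = ℰ(t,u₋) − ψ(θ(s) − u₋). -/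
open Set

theorem psi_subadd {V : Type*} [AddCommGroup V] [Module ℝ V]
    (ψ : V → ℝ) (hψconv : ConvexOn ℝ Set.univ ψ)
    (hψhom : ∀ c : ℝ, 0 ≤ c → ∀ v, ψ (c • v) = c * ψ v)
    (a b : V) : ψ (a + b) ≤ ψ a + ψ b := by
  have h := hψconv.2 (mem_univ a) (mem_univ b)
    (by norm_num : (0:ℝ) ≤ 1/2) (by norm_num : (0:ℝ) ≤ 1/2) (by norm_num)
  have h2 : ψ (a + b) = 2 * ψ ((1/2 : ℝ) • a + (1/2 : ℝ) • b) := by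
    rw [← hψhom 2 (by norm_num)]
    congr 1
    rw [smul_add, smul_smul, smul_smul]
    norm_num
  simp only [smul_eq_mul] at h
  rw [h2]
  linarith

/-- in the convex setting, if `um` is `d`-stable and `up` satisfies the
energetic jump condition `E(t,up) + ψ(up - um) = E(t,um)`, then every point of the
segment `θ(s) = (1-s)um + s up` is `d`-stable and the energy decreases linearly
along it. -/
theorem stmt9 {V : Type*} [AddCommGroup V] [Module ℝ V]
    (X : Set V) (hX : Convex ℝ X)
    (ψ : V → ℝ) (hψnn : ∀ v, 0 ≤ ψ v) (hψconv : ConvexOn ℝ Set.univ ψ)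
    (hψhom : ∀ c : ℝ, 0 ≤ c → ∀ v, ψ (c • v) = c * ψ v)
    (E : ℝ → V → ℝ) (hEconv : ∀ t, ConvexOn ℝ X (E t))
    (t : ℝ) (um up : V) (hum : um ∈ X) (hup : up ∈ X)
    (hstab : ∀ v ∈ X, E t um ≤ E t v + ψ (v - um))
    (hjump : E t up + ψ (up - um) = E t um) :
    ∀ s ∈ Icc (0:ℝ) 1,
      (1 - s) • um + s • up ∈ X ∧
      (∀ v ∈ X, E t ((1 - s) • um + s • up) ≤ E t v + ψ (v - ((1 - s) • um + s • up))) ∧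
      E t ((1 - s) • um + s • up) = E t um - ψ (((1 - s) • um + s • up) - um) := by
  intro s hs
  obtain ⟨hs0, hs1⟩ := hs
  set θ := (1 - s) • um + s • up with hθ
  have hθX : θ ∈ X := hX hum hup (by linarith) hs0 (by ring)
  have hdiff : θ - um = s • (up - um) := by
    rw [hθ]; module
  have hψθ : ψ (θ - um) = s * ψ (up - um) := by
    rw [hdiff, hψhom s hs0]
  -- energy equality
  have hupper : E t θ ≤ (1 - s) * E t um + s * E t up :=
    (hEconv t).2 hum hup (by linarith) hs0 (by ring)
  have hlower : E t um ≤ E t θ + ψ (θ - um) := hstab θ hθX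
  have hEeq : E t θ = E t um - ψ (θ - um) := by
    rw [hψθ] at hlower ⊢
    nlinarith [hψnn (up - um)]
  refine ⟨hθX, ?_, hEeq⟩
  intro v hv
  have h1 : E t um ≤ E t v + ψ (v - um) := hstab v hv
  have h2 : ψ (v - um) ≤ ψ (v - θ) + ψ (θ - um) := by
    have : v - um = (v - θ) + (θ - um) := by abel
    rw [this]; exact psi_subadd ψ hψconv hψhom _ _
  rw [hEeq]; linarith
end

section
/- Assume (ℰ, d, d_*) satisfies the strong α-Λ convexity property: for every x, y ∈ X there is a constant-speed curve γ: [0,1] → X from x to y (d(γ(θ),γ(θ')) = |θ−θ'| d(x,y) and similarly for d_*) along which ℰ(t,γ(θ)) ≤ (1−θ)ℰ(t,x) + θℰ(t,y) − (1/2)θ(1−θ)[α d_*²(x,y) − Λ d(x,y) d_*(x,y)]. Let δ = (1/2)d_*², D = d + δ, R(t,x) = ℰ(t,x) − min_z(ℰ(t,z)+D(x,z)). Then for every y ∈ M(t,x) (minimal set): 2R(t,x) ≥ (α+1) d_*²(x,y) − Λ d(x,y) d_*(x,y). -/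
open Set

lemma stmt11_aux (P Q : ℝ) (h : ∀ θ ∈ Ioo (0:ℝ) 1, P + θ * Q ≤ 0) :
    P + Q ≤ 0 := by
  by_contra hc
  push_neg at hc
  rcases le_or_gt Q 0 with hQ0 | hQ0
  · have := h (1/2) ⟨by norm_num, by norm_num⟩
    linarith
  · set θ := max (1/2 : ℝ) (1 - (P + Q)/(2*Q)) with hθdef
    have hθmem : θ ∈ Ioo (0:ℝ) 1 := by
      constructor
      · exact lt_of_lt_of_le (by norm_num) (le_max_left _ _)
      · apply max_lt (by norm_num)
        have : 0 < (P + Q)/(2*Q) := div_pos hc (by linarith)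
        linarith
    have hk := h θ hθmem
    have h5 : (1 - (P + Q)/(2*Q)) * Q ≤ θ * Q :=
      mul_le_mul_of_nonneg_right (le_max_right _ _) hQ0.le
    have h6 : (P + Q)/(2*Q) * Q = (P + Q)/2 := by
      field_simp
    have h5' : Q - (P + Q)/2 ≤ θ * Q := by nlinarith [h5, h6]
    linarith

/-- under the strong α-Λ convexity of `(E, d, d_*)`, with
`δ = (1/2)d_*²`, `D = d + δ`, residual `R(t,x) = E(t,x) - min_z (E(t,z) + D(x,z))`
(attained minimum `Y`), every minimizer `y ∈ M(t,x)` satisfies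
`2 R(t,x) ≥ (α+1) d_*²(x,y) - Λ d(x,y) d_*(x,y)`. -/
theorem stmt11 {X : Type*} (E : ℝ → X → ℝ) (d dstar : X → X → ℝ)
    (hdnn : ∀ x y, 0 ≤ d x y) (hdstarnn : ∀ x y, 0 ≤ dstar x y)
    (α Λ : ℝ) (hα : 0 < α) (hΛ : 0 ≤ Λ)
    (hconv : ∀ t : ℝ, ∀ x y : X, ∃ γ : ℝ → X, γ 0 = x ∧ γ 1 = y ∧
      (∀ θ ∈ Icc (0:ℝ) 1, ∀ θ' ∈ Icc (0:ℝ) 1,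
        d (γ θ) (γ θ') = |θ - θ'| * d x y ∧
        dstar (γ θ) (γ θ') = |θ - θ'| * dstar x y) ∧
      (∀ θ ∈ Icc (0:ℝ) 1,
        E t (γ θ) ≤ (1 - θ) * E t x + θ * E t y -
          (1/2) * θ * (1 - θ) * (α * (dstar x y)^2 - Λ * d x y * dstar x y)))
    (D : X → X → ℝ) (hD : ∀ x y, D x y = d x y + (1/2) * (dstar x y)^2)
    (Y : ℝ → X → ℝ)
    (hY : ∀ t x, (∃ y, E t y + D x y = Y t x) ∧ ∀ z, Y t x ≤ E t z + D x z)
    (R : ℝ → X → ℝ) (hR : ∀ t x, R t x = E t x - Y t x)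
    (M : ℝ → X → Set X) (hM : ∀ t x, M t x = {y | E t y + D x y = Y t x}) :
    ∀ (t : ℝ) (x y : X), y ∈ M t x →
      2 * R t x ≥ (α + 1) * (dstar x y)^2 - Λ * d x y * dstar x y := by
  intro t x y hy
  rw [hM] at hy
  simp only [mem_setOf_eq] at hy
  obtain ⟨γ, hγ0, hγ1, hdist, hE⟩ := hconv t x y
  have key : ∀ θ ∈ Ioo (0:ℝ) 1,
      (E t y + d x y + (1/2)*(dstar x y)^2 - E t x) +
        θ * ((1/2)*(dstar x y)^2 + (1/2)*(α*(dstar x y)^2 - Λ * d x y * dstar x y)) ≤ 0 := by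
    intro θ hθ
    obtain ⟨hθ0, hθ1⟩ := hθ
    have h1 : Y t x ≤ E t (γ θ) + D x (γ θ) := (hY t x).2 _
    have h2 := hE θ ⟨hθ0.le, hθ1.le⟩
    have h3 := hdist 0 ⟨le_refl 0, zero_le_one⟩ θ ⟨hθ0.le, hθ1.le⟩
    rw [hγ0] at h3
    have habs : |(0:ℝ) - θ| = θ := by
      rw [abs_sub_comm]; simp [abs_of_pos hθ0]
    have hd : d x (γ θ) = θ * d x y := by rw [h3.1, habs]
    have hds : dstar x (γ θ) = θ * dstar x y := by rw [h3.2, habs]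
    rw [hD, hd, hds, ← hy, hD] at h1
    have hfac : (1 - θ) * ((E t y + d x y + (1/2)*(dstar x y)^2 - E t x) +
        θ * ((1/2)*(dstar x y)^2 + (1/2)*(α*(dstar x y)^2 - Λ * d x y * dstar x y))) ≤ 0 := by
      nlinarith [h1, h2]
    by_contra hc
    push_neg at hc
    have hpos : 0 < (1 - θ) * ((E t y + d x y + (1/2)*(dstar x y)^2 - E t x) +
        θ * ((1/2)*(dstar x y)^2 + (1/2)*(α*(dstar x y)^2 - Λ * d x y * dstar x y))) :=
      mul_pos (by linarith) hc
    linarith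
  have hPQ := stmt11_aux _ _ key
  rw [hR, ← hy, hD]
  nlinarith [hPQ]
end

section
/- Let (U^n_τ) solve the viscous incremental minimization scheme with ℰ(0,U^0_τ) + d(x_o,U^0_τ) + F_o ≤ C_0, and suppose |P(t,x)| ≤ C_P(ℰ(t,x) + d(x_o,x) + F_o). Then ℰ(t^n_τ, U^n_τ) + d(x_o, U^n_τ) + F_o ≤ C_0 e^{C_P t^n_τ} for every n, and ∑_{j=1}^N [D(U^{j−1}_τ, U^j_τ) + R(t^j_τ, U^{j−1}_τ)] ≤ C_0 e^{C_P T} + C_1, where C_1 is any bound for d(x_o, U^n_τ) over n. -/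
/-!
Write `F(t, x) = ℰ(t, x) + d(x_o, x) + F_o`. Along a frozen state `x` we have `∂ₜF = P` and
`|P| ≤ C_P F`, so Grönwall gives `F(s, x) ≤ F(a, x) e^{C_P (s - a)}`. Testing the minimality of
`Uⁿ` with `Uⁿ⁻¹` and using the triangle inequality gives `F(tⁿ, Uⁿ) ≤ F(tⁿ, Uⁿ⁻¹)`; chaining
the two yields the energy bound. Since `Uʲ` attains the infimum defining `Y(tʲ, Uʲ⁻¹)`, each
summand `D + R` equals `ℰ(tʲ, Uʲ⁻¹) - ℰ(tʲ, Uʲ)`. This splits into the power increment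
`ℰ(tʲ, Uʲ⁻¹) - ℰ(tʲ⁻¹, Uʲ⁻¹) ≤ C₀ (e^{C_P tʲ} - e^{C_P tʲ⁻¹})` plus a telescoping energy
difference.
-/

open Set MeasureTheory Finset Real

theorem le_mul_exp_of_le_add_mul_integral {f : ℝ → ℝ} {a b C K : ℝ} (hC : 0 ≤ C)
    (hf : Continuous f) (hle : ∀ s ∈ Icc a b, f s ≤ K + C * ∫ r in a..s, f r) :
    ∀ s ∈ Icc a b, f s ≤ K * exp (C * (s - a)) := by
  -- The differential Grönwall inequality applies to the right-hand side `G`: `G' = C f ≤ C G`.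
  set G : ℝ → ℝ := fun s => K + C * ∫ r in a..s, f r
  have hG : ∀ s, HasDerivAt G (C * f s) s := fun s =>
    ((hf.integral_hasStrictDerivAt a s).hasDerivAt.const_mul C).const_add K
  have hG_le := le_gronwallBound_of_liminf_deriv_right_le (f := G) (a := a) (b := b) (δ := K)
    (ε := 0) (fun s _ => (hG s).continuousAt.continuousWithinAt)
    (fun s _ _ hr => (hG s).hasDerivWithinAt.liminf_right_slope_le hr) (by simp [G])
    (fun s hs => by simpa using mul_le_mul_of_nonneg_left (hle s (Ico_subset_Icc_self hs)) hC)
  intro s hs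
  simpa [gronwallBound_ε0] using (hle s hs).trans (hG_le s hs)

theorem le_mul_exp_of_sub_eq_integral {g p : ℝ → ℝ} {a b C : ℝ} (hC : 0 ≤ C)
    (hp : ∀ u v, IntervalIntegrable p volume u v) (hg : ∀ u v, g v - g u = ∫ r in u..v, p r)
    (hpg : ∀ s ∈ Icc a b, p s ≤ C * g s) :
    ∀ s ∈ Icc a b, g s ≤ g a * exp (C * (s - a)) := by
  have hg_eq : g = fun s => g a + ∫ r in a..s, p r := funext fun s => by linarith [hg a s]
  have hcont : Continuous g := by
    rw [hg_eq]
    exact continuous_const.add (intervalIntegral.continuous_primitive hp a)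
  refine le_mul_exp_of_le_add_mul_integral hC hcont fun s hs => ?_
  calc g s = g a + ∫ r in a..s, p r := by linarith [hg a s]
    _ ≤ g a + ∫ r in a..s, C * g r := by
      gcongr
      exact intervalIntegral.integral_mono_on hs.1 (hp a s)
        ((hcont.const_mul C).intervalIntegrable a s) fun r hr => hpg r ⟨hr.1, hr.2.trans hs.2⟩
    _ = g a + C * ∫ r in a..s, g r := by rw [intervalIntegral.integral_const_mul]

theorem le_mul_exp_of_le_mul_exp_sub {a t : ℕ → ℝ} {C M : ℝ} {N : ℕ} (h0 : a 0 ≤ M)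
    (hstep : ∀ n < N, a (n + 1) ≤ a n * exp (C * (t (n + 1) - t n))) :
    ∀ n ≤ N, a n ≤ M * exp (C * (t n - t 0)) := by
  intro n hn
  induction n with
  | zero => simpa using h0
  | succ n ih =>
    calc a (n + 1) ≤ a n * exp (C * (t (n + 1) - t n)) := hstep n hn
      _ ≤ M * exp (C * (t n - t 0)) * exp (C * (t (n + 1) - t n)) := by
        gcongr
        exact ih (by omega)
      _ = M * exp (C * (t (n + 1) - t 0)) := by rw [mul_assoc, ← exp_add]; ring_nf

theorem sum_range_sub_succ_le {x y b : ℕ → ℝ} {N : ℕ}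
    (h : ∀ i < N, x i - y i ≤ b (i + 1) - b i) :
    ∑ i ∈ range N, (x i - y (i + 1)) ≤ b N - b 0 + (y 0 - y N) := by
  have hsplit : ∑ i ∈ range N, (x i - y (i + 1)) =
      ∑ i ∈ range N, (x i - y i) + ∑ i ∈ range N, (y i - y (i + 1)) := by
    rw [← sum_add_distrib]
    exact sum_congr rfl fun i _ => by ring
  rw [hsplit, sum_range_sub']
  gcongr
  exact (sum_le_sum fun i hi => h i (mem_range.1 hi)).trans_eq (sum_range_sub b N)

theorem sum_sub_le_of_le_mul_exp {e : ℕ → ℝ → ℝ} {w t : ℕ → ℝ} {C M : ℝ} {N : ℕ}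
    (hC : 0 ≤ C) (ht : ∀ n < N, t n ≤ t (n + 1))
    (hbound : ∀ n ≤ N, e n (t n) + w n ≤ M * exp (C * t n))
    (hgrow : ∀ n < N, e n (t (n + 1)) + w n ≤ (e n (t n) + w n) * exp (C * (t (n + 1) - t n))) :
    ∑ i ∈ range N, (e i (t (i + 1)) - e (i + 1) (t (i + 1))) ≤
      M * exp (C * t N) - M * exp (C * t 0) + (e 0 (t 0) - e N (t N)) := by
  refine sum_range_sub_succ_le (x := fun n => e n (t (n + 1))) (y := fun n => e n (t n))
    (b := fun n => M * exp (C * t n)) fun n hn => ?_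
  have hexp : 1 ≤ exp (C * (t (n + 1) - t n)) :=
    one_le_exp (mul_nonneg hC (sub_nonneg.2 (ht n hn)))
  have hb : M * exp (C * t (n + 1)) = M * exp (C * t n) * exp (C * (t (n + 1) - t n)) := by
    rw [mul_assoc, ← exp_add]; ring_nf
  nlinarith [hgrow n hn, hbound n hn.le]

theorem sum_Icc_one_eq_sum_range {M : Type*} [AddCommMonoid M] (f : ℕ → M) (N : ℕ) :
    ∑ j ∈ Icc 1 N, f j = ∑ i ∈ range N, f (i + 1) := by
  rw [range_eq_Ico, sum_Ico_add' f 0 N 1, zero_add, Finset.Ico_add_one_right_eq_Icc]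

theorem stmt14_general {X : Type*} (T : ℝ) (E : ℝ → X → ℝ)
    (d δ : X → X → ℝ) (x_o : X)
    (hdnn : ∀ x y, 0 ≤ d x y) (hd0 : ∀ x, d x x = 0)
    (htri : ∀ x y z, d x z ≤ d x y + d y z)
    (hδnn : ∀ x y, 0 ≤ δ x y) (hδ0 : ∀ x, δ x x = 0)
    (D : X → X → ℝ) (hD : ∀ x y, D x y = d x y + δ x y)
    (Y : ℝ → X → ℝ)
    (hY : ∀ t x, (∃ y, E t y + D x y = Y t x) ∧ ∀ z, Y t x ≤ E t z + D x z)
    (R : ℝ → X → ℝ) (hR : ∀ t x, R t x = E t x - Y t x)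
    (P : ℝ → X → ℝ) (C_P F_o C_0 C_1 : ℝ) (hCP : 0 < C_P)
    (hFnn : ∀ t ∈ Icc (0:ℝ) T, ∀ x, 0 ≤ E t x + d x_o x + F_o)
    (hpow : ∀ t ∈ Icc (0:ℝ) T, ∀ x, |P t x| ≤ C_P * (E t x + d x_o x + F_o))
    (hinteg : ∀ x t₀ t₁, IntervalIntegrable (fun s => P s x) volume t₀ t₁)
    (hPint : ∀ x : X, ∀ s t : ℝ, E t x - E s x = ∫ r in s..t, P r x)
    (N : ℕ) (t : ℕ → ℝ) (ht : StrictMonoOn t (Set.Iic N))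
    (ht0 : t 0 = 0) (htN : t N = T)
    (U : ℕ → X)
    (hinit : E (t 0) (U 0) + d x_o (U 0) + F_o ≤ C_0)
    (hmin : ∀ n : ℕ, 1 ≤ n → n ≤ N → ∀ V : X,
      E (t n) (U n) + d (U (n-1)) (U n) + δ (U (n-1)) (U n) ≤
        E (t n) V + d (U (n-1)) V + δ (U (n-1)) V)
    (hC1 : ∀ n ≤ N, d x_o (U n) ≤ C_1) :
    (∀ n ≤ N, E (t n) (U n) + d x_o (U n) + F_o ≤ C_0 * Real.exp (C_P * t n)) ∧
    ∑ j ∈ Finset.Icc 1 N, (D (U (j-1)) (U j) + R (t j) (U (j-1))) ≤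
      C_0 * Real.exp (C_P * T) + C_1 := by
  have ht_mem : ∀ n ≤ N, t n ∈ Icc 0 T := fun n hn =>
    ⟨ht0 ▸ ht.monotoneOn (by simp) (mem_Iic.2 hn) n.zero_le,
      htN ▸ ht.monotoneOn (mem_Iic.2 hn) (by simp) hn⟩
  have ht_succ : ∀ n < N, t n ≤ t (n + 1) := fun n hn =>
    ht.monotoneOn (mem_Iic.2 hn.le) (mem_Iic.2 hn) n.le_succ
  have hU_least : ∀ n < N, IsLeast (range fun V => E (t (n + 1)) V + D (U n) V)
      (E (t (n + 1)) (U (n + 1)) + D (U n) (U (n + 1))) := fun n hn =>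
    ⟨mem_range_self _, forall_mem_range.2 fun V => by
      simpa [hD, add_assoc] using hmin (n + 1) (by omega) hn V⟩
  have hgrow : ∀ n < N, E (t (n + 1)) (U n) + d x_o (U n) + F_o ≤
      (E (t n) (U n) + d x_o (U n) + F_o) * exp (C_P * (t (n + 1) - t n)) := fun n hn =>
    le_mul_exp_of_sub_eq_integral (g := fun s => E s (U n) + d x_o (U n) + F_o) hCP.le
      (hinteg (U n)) (fun u v => by simpa using hPint (U n) u v)
      (fun s hs => (le_abs_self _).trans (hpow s ⟨(ht_mem n hn.le).1.trans hs.1,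
        hs.2.trans (ht_mem (n + 1) hn).2⟩ (U n))) _ ⟨ht_succ n hn, le_rfl⟩
  have hstep : ∀ n < N, E (t (n + 1)) (U (n + 1)) + d x_o (U (n + 1)) + F_o ≤
      E (t (n + 1)) (U n) + d x_o (U n) + F_o := fun n hn => by
    linarith [(hU_least n hn).2 (mem_range_self (U n)), hD (U n) (U n), hd0 (U n), hδ0 (U n),
      hD (U n) (U (n + 1)), hδnn (U n) (U (n + 1)), htri x_o (U n) (U (n + 1))]
  have henergy : ∀ n ≤ N, E (t n) (U n) + d x_o (U n) + F_o ≤ C_0 * exp (C_P * t n) := by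
    simpa [ht0] using le_mul_exp_of_le_mul_exp_sub (t := t) hinit fun n hn =>
      (hstep n hn).trans (hgrow n hn)
  refine ⟨henergy, ?_⟩
  have hterm : ∀ n ∈ range N, D (U n) (U (n + 1)) + R (t (n + 1)) (U n) =
      E (t (n + 1)) (U n) - E (t (n + 1)) (U (n + 1)) := fun n hn => by
    have hY_least : IsLeast _ (Y _ _) :=
      ⟨(hY _ _).1, forall_mem_range.2 (hY (t (n + 1)) (U n)).2⟩
    rw [hR, hY_least.unique (hU_least n (mem_range.1 hn))]
    ring
  have hsum := sum_sub_le_of_le_mul_exp (e := fun n s => E s (U n))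
    (w := fun n => d x_o (U n) + F_o) hCP.le ht_succ (by simpa only [add_assoc] using henergy)
    (by simpa only [add_assoc] using hgrow)
  rw [sum_Icc_one_eq_sum_range]
  simp only [Nat.add_sub_cancel]
  rw [sum_congr rfl hterm, ← htN]
  have hexp0 : exp (C_P * t 0) = 1 := by rw [ht0, mul_zero, exp_zero]
  linarith [hexp0 ▸ hsum, hFnn _ (ht_mem N le_rfl) (U N), hdnn x_o (U 0), hC1 N le_rfl]

/-- a priori estimates for the viscous incremental minimization scheme:
uniform bound on the perturbed energy `F(t,x) = E(t,x) + d(x_o,x) + F_o` and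
on the total dissipation plus residual sum. -/
theorem stmt14 {X : Type*} (T : ℝ) (hT : 0 < T) (E : ℝ → X → ℝ)
    (d δ : X → X → ℝ) (x_o : X)
    (hdnn : ∀ x y, 0 ≤ d x y) (hd0 : ∀ x, d x x = 0)
    (htri : ∀ x y z, d x z ≤ d x y + d y z)
    (hδnn : ∀ x y, 0 ≤ δ x y) (hδ0 : ∀ x, δ x x = 0)
    (D : X → X → ℝ) (hD : ∀ x y, D x y = d x y + δ x y)
    (Y : ℝ → X → ℝ)
    (hY : ∀ t x, (∃ y, E t y + D x y = Y t x) ∧ ∀ z, Y t x ≤ E t z + D x z)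
    (R : ℝ → X → ℝ) (hR : ∀ t x, R t x = E t x - Y t x)
    (P : ℝ → X → ℝ) (C_P F_o C_0 C_1 : ℝ) (hCP : 0 < C_P) (hFo : 0 ≤ F_o)
    (hFnn : ∀ t ∈ Icc (0:ℝ) T, ∀ x, 0 ≤ E t x + d x_o x + F_o)
    (hpow : ∀ t ∈ Icc (0:ℝ) T, ∀ x, |P t x| ≤ C_P * (E t x + d x_o x + F_o))
    (hinteg : ∀ x t₀ t₁, IntervalIntegrable (fun s => P s x) volume t₀ t₁)
    (hPint : ∀ x : X, ∀ s t : ℝ, E t x - E s x = ∫ r in s..t, P r x)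
    (N : ℕ) (t : ℕ → ℝ) (ht : StrictMonoOn t (Set.Iic N))
    (ht0 : t 0 = 0) (htN : t N = T)
    (U : ℕ → X)
    (hinit : E (t 0) (U 0) + d x_o (U 0) + F_o ≤ C_0)
    (hmin : ∀ n : ℕ, 1 ≤ n → n ≤ N → ∀ V : X,
      E (t n) (U n) + d (U (n-1)) (U n) + δ (U (n-1)) (U n) ≤
        E (t n) V + d (U (n-1)) V + δ (U (n-1)) V)
    (hC1 : ∀ n ≤ N, d x_o (U n) ≤ C_1) :
    (∀ n ≤ N, E (t n) (U n) + d x_o (U n) + F_o ≤ C_0 * Real.exp (C_P * t n)) ∧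
    ∑ j ∈ Finset.Icc 1 N, (D (U (j-1)) (U j) + R (t j) (U (j-1))) ≤
      C_0 * Real.exp (C_P * T) + C_1 :=
  stmt14_general T E d δ x_o hdnn hd0 htri hδnn hδ0 D hD Y hY R hR P C_P F_o C_0 C_1 hCP hFnn hpow
    hinteg hPint N t ht ht0 htN U hinit hmin hC1
end

section
/- Let (E_k) be a sequence of compact subsets of ℝ Kuratowski-converging to a compact set E, and ϑ_k: E_k → X, ϑ: E → X with graph(ϑ) ⊂ Li_k graph(ϑ_k) (i.e. for every s ∈ E there exist s_k ∈ E_k with s_k → s and ϑ_k(s_k) → ϑ(s)). If d is lower semicontinuous on X × X, then Var(ϑ, E) ≤ liminf_{k→∞} Var(ϑ_k, E_k), where Var denotes the pointwise d-total variation. -/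
open Set Filter Topology ENNReal

/-- Pointwise total variation of `ϑ : ℝ → X` on `E ⊆ ℝ` with respect to an
(extended-valued) quasi-distance `d`. -/
noncomputable def pVar {X : Type*} (d : X → X → ℝ≥0∞) (ϑ : ℝ → X) (E : Set ℝ) : ℝ≥0∞ :=
  sSup {s | ∃ (n : ℕ) (σ : ℕ → ℝ), StrictMonoOn σ (Set.Iic n) ∧ (∀ i ≤ n, σ i ∈ E) ∧
    s = ∑ i ∈ Finset.range n, d (ϑ (σ i)) (ϑ (σ (i+1)))}

/-! Fix a partition `σ 0 < ⋯ < σ n` of `E`. By the graph convergence each node `σ i` is the limit of nodes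
`s_k(σ i) ∈ E_k` along which `ϑ_k` converges to `ϑ (σ i)`; for large `k` these nodes are again
strictly increasing, so they form a partition of `E_k`. Lower semicontinuity of `d` bounds each
increment of `ϑ` by the liminf of the corresponding increments of `ϑ_k`, and the liminf of a finite
sum in `ℝ≥0∞` dominates the sum of the liminfs. -/

theorem LowerSemicontinuous.le_liminf_of_tendsto {Y ι : Type*} [TopologicalSpace Y]
    {f : Y → ℝ≥0∞} (hf : LowerSemicontinuous f) {l : Filter ι} {u : ι → Y} {y : Y}
    (hu : Tendsto u l (𝓝 y)) : f y ≤ liminf (fun k => f (u k)) l :=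
  (hf.le_liminf y).trans (hu.liminf_le_liminf_comp (u := f))

theorem ENNReal.liminf_add_liminf_le {ι : Type*} {l : Filter ι} (u v : ι → ℝ≥0∞) :
    liminf u l + liminf v l ≤ liminf (fun k => u k + v k) l := by
  simp only [liminf_eq_iSup_iInf]
  exact ENNReal.biSup_add_biSup_le ⟨univ, univ_mem⟩ ⟨univ, univ_mem⟩ fun s hs t ht =>
    le_iSup₂_of_le (s ∩ t) (inter_mem hs ht)
      (le_iInf₂ fun k hk => add_le_add (iInf₂_le k hk.1) (iInf₂_le k hk.2))

theorem ENNReal.sum_liminf_le_liminf_sum {ι κ : Type*} {l : Filter ι} (s : Finset κ)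
    (u : κ → ι → ℝ≥0∞) :
    ∑ i ∈ s, liminf (u i) l ≤ liminf (fun k => ∑ i ∈ s, u i k) l := by
  classical
  induction s using Finset.induction_on with
  | empty => simp
  | insert j s hj ih =>
    simp only [Finset.sum_insert hj]
    exact (add_le_add_right ih _).trans (ENNReal.liminf_add_liminf_le _ _)

theorem eventually_strictMonoOn_Iic_of_tendsto {ι α : Type*} [LinearOrder α] [TopologicalSpace α]
    [OrderClosedTopology α] {l : Filter ι} {n : ℕ} {σ : ℕ → α} (hσ : StrictMonoOn σ (Iic n))
    {u : ℕ → ι → α} (hu : ∀ i ≤ n, Tendsto (u i) l (𝓝 (σ i))) :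
    ∀ᶠ k in l, StrictMonoOn (fun i => u i k) (Iic n) := by
  have hsucc : ∀ᶠ k in l, ∀ i ∈ Finset.range n, u i k < u (i + 1) k := by
    refine (eventually_all_finset _).2 fun i hi => ?_
    have hi : i + 1 ≤ n := Finset.mem_range.1 hi
    exact (hu i (by omega)).eventually_lt (hu (i + 1) hi)
      (hσ (mem_Iic.2 (by omega)) (mem_Iic.2 hi) i.lt_succ_self)
  exact hsucc.mono fun k hk => strictMonoOn_Iic_of_lt_succ fun i hi => hk i (Finset.mem_range.2 hi)

theorem sum_le_pVar {X : Type*} (d : X → X → ℝ≥0∞) (ϑ : ℝ → X) {E : Set ℝ} {n : ℕ} {σ : ℕ → ℝ}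
    (hσ : StrictMonoOn σ (Iic n)) (hσE : ∀ i ≤ n, σ i ∈ E) :
    ∑ i ∈ Finset.range n, d (ϑ (σ i)) (ϑ (σ (i + 1))) ≤ pVar d ϑ E :=
  le_sSup ⟨n, σ, hσ, hσE, rfl⟩

theorem stmt16_general {X : Type*} [TopologicalSpace X]
    (d : X → X → ℝ≥0∞)
    (hlsc : LowerSemicontinuous (fun p : X × X => d p.1 p.2))
    (Ek : ℕ → Set ℝ) (E : Set ℝ)
    (ϑk : ℕ → ℝ → X) (ϑ : ℝ → X)
    (hgraph : ∀ r ∈ E, ∃ s : ℕ → ℝ, (∀ k, s k ∈ Ek k) ∧ Tendsto s atTop (𝓝 r) ∧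
      Tendsto (fun k => ϑk k (s k)) atTop (𝓝 (ϑ r))) :
    pVar d ϑ E ≤ Filter.liminf (fun k => pVar d (ϑk k) (Ek k)) atTop := by
  refine sSup_le ?_
  rintro _ ⟨n, σ, hσ, hσE, rfl⟩
  choose! s hsEk hs hϑs using hgraph
  have hpartition : ∀ᶠ k in atTop, StrictMonoOn (fun i => s (σ i) k) (Iic n) :=
    eventually_strictMonoOn_Iic_of_tendsto hσ fun i hi => hs _ (hσE i hi)
  calc ∑ i ∈ Finset.range n, d (ϑ (σ i)) (ϑ (σ (i + 1)))
      ≤ ∑ i ∈ Finset.range n,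
          liminf (fun k => d (ϑk k (s (σ i) k)) (ϑk k (s (σ (i + 1)) k))) atTop := by
        refine Finset.sum_le_sum fun i hi => ?_
        have hi : i + 1 ≤ n := Finset.mem_range.1 hi
        exact hlsc.le_liminf_of_tendsto
          ((hϑs _ (hσE i (by omega))).prodMk_nhds (hϑs _ (hσE (i + 1) hi)))
    _ ≤ liminf (fun k => ∑ i ∈ Finset.range n,
          d (ϑk k (s (σ i) k)) (ϑk k (s (σ (i + 1)) k))) atTop :=
        ENNReal.sum_liminf_le_liminf_sum _ _
    _ ≤ liminf (fun k => pVar d (ϑk k) (Ek k)) atTop :=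
        liminf_le_liminf (hpartition.mono fun k hk =>
          sum_le_pVar d (ϑk k) hk fun i hi => hsEk _ (hσE i hi) k)

/-- lower semicontinuity of the total variation along sequences of
transitions `ϑ_k : E_k → X` whose graphs converge in the Kuratowski-liminf sense
to the graph of `ϑ : E → X`, the compact sets `E_k` Kuratowski-converging to `E`,
for a lower semicontinuous quasi-distance `d`. -/
theorem stmt16 {X : Type*} [TopologicalSpace X] [FirstCountableTopology X]
    (d : X → X → ℝ≥0∞)
    (hlsc : LowerSemicontinuous (fun p : X × X => d p.1 p.2))
    (Ek : ℕ → Set ℝ) (E : Set ℝ)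
    (hEk : ∀ k, IsCompact (Ek k)) (hE : IsCompact E)
    (hLi : E = {x : ℝ | ∃ s : ℕ → ℝ, (∀ k, s k ∈ Ek k) ∧ Tendsto s atTop (𝓝 x)})
    (hLs : E = {x : ℝ | ∃ φ : ℕ → ℕ, StrictMono φ ∧ ∃ s : ℕ → ℝ,
      (∀ n, s n ∈ Ek (φ n)) ∧ Tendsto s atTop (𝓝 x)})
    (ϑk : ℕ → ℝ → X) (ϑ : ℝ → X)
    (hgraph : ∀ r ∈ E, ∃ s : ℕ → ℝ, (∀ k, s k ∈ Ek k) ∧ Tendsto s atTop (𝓝 r) ∧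
      Tendsto (fun k => ϑk k (s k)) atTop (𝓝 (ϑ r))) :
    pVar d ϑ E ≤ Filter.liminf (fun k => pVar d (ϑk k) (Ek k)) atTop :=
  stmt16_general d hlsc Ek E ϑk ϑ hgraph
end

section
/- Let E_k ⊂ ℝ be compact sets Kuratowski-converging to E, and suppose I = (I⁻, I⁺) is a bounded connected component of ℝ \ E. Then there exist bounded connected components I_k = (I_k⁻, I_k⁺) of ℝ \ E_k (for k large) with I_k⁻ → I⁻ and I_k⁺ → I⁺. -/
open Set Filter Topology

lemma aux17 (Ek : ℕ → Set ℝ) (E : Set ℝ)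
    (hLs : E = {x : ℝ | ∃ φ : ℕ → ℕ, StrictMono φ ∧ ∃ s : ℕ → ℝ,
      (∀ n, s n ∈ Ek (φ n)) ∧ Tendsto s atTop (𝓝 x)})
    (u : ℕ → ℝ) (lo hi : ℝ)
    (hfreq : ∃ᶠ k in atTop, u k ∈ Ek k ∧ u k ∈ Icc lo hi) :
    ∃ x ∈ Icc lo hi, x ∈ E := by
  obtain ⟨φ, hφ, hmem⟩ := Filter.extraction_of_frequently_atTop hfreq
  obtain ⟨x, hx, ψ, hψ, hlim⟩ := isCompact_Icc.tendsto_subseq (fun n => (hmem n).2)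
  refine ⟨x, hx, ?_⟩
  rw [hLs]
  exact ⟨φ ∘ ψ, hφ.comp hψ, (u ∘ φ) ∘ ψ, fun n => (hmem (ψ n)).1, hlim⟩

/-- stability of holes under Kuratowski convergence of compact sets.
If `E_k → E` in the Kuratowski sense and `(a,b)` is a bounded connected component of
`ℝ \ E` (with endpoints `a, b ∈ E`), then eventually there are holes `(a_k, b_k)`
of `E_k` with `a_k → a` and `b_k → b`. -/
theorem stmt17 (Ek : ℕ → Set ℝ) (E : Set ℝ)
    (hEk : ∀ k, IsCompact (Ek k)) (hE : IsCompact E)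
    (hLi : E = {x : ℝ | ∃ s : ℕ → ℝ, (∀ k, s k ∈ Ek k) ∧ Tendsto s atTop (𝓝 x)})
    (hLs : E = {x : ℝ | ∃ φ : ℕ → ℕ, StrictMono φ ∧ ∃ s : ℕ → ℝ,
      (∀ n, s n ∈ Ek (φ n)) ∧ Tendsto s atTop (𝓝 x)})
    (a b : ℝ) (ha : a ∈ E) (hb : b ∈ E) (hab : a < b)
    (hhole : Ioo a b ∩ E = ∅) :
    ∃ ak bk : ℕ → ℝ,
      (∀ᶠ k in atTop,
        ak k ∈ Ek k ∧ bk k ∈ Ek k ∧ ak k < bk k ∧ Ioo (ak k) (bk k) ∩ Ek k = ∅) ∧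
      Tendsto ak atTop (𝓝 a) ∧ Tendsto bk atTop (𝓝 b) := by
  set m : ℝ := (a + b) / 2 with hmdef
  have hm1 : a < m := by rw [hmdef]; linarith
  have hm2 : m < b := by rw [hmdef]; linarith
  have hholeE : ∀ x, x ∈ Ioo a b → x ∉ E := fun x hx hxE =>
    (eq_empty_iff_forall_notMem.mp hhole x) ⟨hx, hxE⟩
  -- sequences converging to a and b
  rw [hLi] at ha hb
  obtain ⟨s, hs, hsa⟩ := ha
  obtain ⟨t, ht, htb⟩ := hb
  have hsm : ∀ᶠ k in atTop, s k < m := hsa.eventually_lt_const hm1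
  have htm : ∀ᶠ k in atTop, m < t k := htb.eventually_const_lt hm2
  -- eventually m ∉ Ek k
  have hmEk : ∀ᶠ k in atTop, m ∉ Ek k := by
    by_contra h
    rw [not_eventually] at h
    obtain ⟨x, hx, hxE⟩ := aux17 Ek E hLs (fun _ => m) m m
      (h.mono fun k hk => ⟨not_not.mp hk, le_refl m, le_refl m⟩)
    have hxm : x = m := le_antisymm hx.2 hx.1
    exact hholeE m ⟨hm1, hm2⟩ (hxm ▸ hxE)
  -- the candidate endpoints
  refine ⟨fun k => sSup (Ek k ∩ Iic m), fun k => sInf (Ek k ∩ Ici m), ?_, ?_, ?_⟩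
  · filter_upwards [hsm, htm, hmEk] with k hks hkt hkm
    have hcA : IsCompact (Ek k ∩ Iic m) := (hEk k).inter_right isClosed_Iic
    have hcB : IsCompact (Ek k ∩ Ici m) := (hEk k).inter_right isClosed_Ici
    have hneA : (Ek k ∩ Iic m).Nonempty := ⟨s k, hs k, hks.le⟩
    have hneB : (Ek k ∩ Ici m).Nonempty := ⟨t k, ht k, hkt.le⟩
    have hak := hcA.sSup_mem hneA
    have hbk := hcB.sInf_mem hneB
    have hakm : sSup (Ek k ∩ Iic m) < m :=
      lt_of_le_of_ne hak.2 (fun h => hkm (h ▸ hak.1))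
    have hmbk : m < sInf (Ek k ∩ Ici m) :=
      lt_of_le_of_ne hbk.2 (fun h => hkm (h ▸ hbk.1))
    refine ⟨hak.1, hbk.1, hakm.trans hmbk, ?_⟩
    rw [eq_empty_iff_forall_notMem]
    rintro x ⟨⟨hx1, hx2⟩, hxE⟩
    rcases le_or_gt x m with hxm | hxm
    · exact absurd (le_csSup hcA.bddAbove ⟨hxE, hxm⟩) (not_le.mpr hx1)
    · exact absurd (csInf_le hcB.bddBelow ⟨hxE, hxm.le⟩) (not_le.mpr hx2)
  · rw [tendsto_order]
    constructor
    · intro c hc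
      filter_upwards [hsm, hsa.eventually_const_lt hc] with k h1 h2
      exact h2.trans_le (le_csSup ((hEk k).inter_right isClosed_Iic).bddAbove ⟨hs k, h1.le⟩)
    · intro c hc
      by_contra h
      rw [not_eventually] at h
      have h' : ∃ᶠ k in atTop, c ≤ sSup (Ek k ∩ Iic m) := h.mono fun k hk => not_lt.mp hk
      have hev : ∀ᶠ k in atTop, sSup (Ek k ∩ Iic m) ∈ Ek k ∩ Iic m := by
        filter_upwards [hsm] with k hks
        exact ((hEk k).inter_right isClosed_Iic).sSup_mem ⟨s k, hs k, hks.le⟩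
      have hc' : a < min c m := lt_min hc hm1
      obtain ⟨x, hx, hxE⟩ := aux17 Ek E hLs (fun k => sSup (Ek k ∩ Iic m)) (min c m) m
        ((h'.and_eventually hev).mono fun k ⟨h1, h2, h3⟩ =>
          ⟨h2, le_trans (min_le_left _ _) h1, h3⟩)
      exact hholeE x ⟨hc'.trans_le hx.1, lt_of_le_of_lt hx.2 hm2⟩ hxE
  · rw [tendsto_order]
    constructor
    · intro c hc
      by_contra h
      rw [not_eventually] at h
      have h' : ∃ᶠ k in atTop, sInf (Ek k ∩ Ici m) ≤ c := h.mono fun k hk => not_lt.mp hk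
      have hev : ∀ᶠ k in atTop, sInf (Ek k ∩ Ici m) ∈ Ek k ∩ Ici m := by
        filter_upwards [htm] with k hkt
        exact ((hEk k).inter_right isClosed_Ici).sInf_mem ⟨t k, ht k, hkt.le⟩
      have hc' : max c m < b := max_lt hc hm2
      obtain ⟨x, hx, hxE⟩ := aux17 Ek E hLs (fun k => sInf (Ek k ∩ Ici m)) m (max c m)
        ((h'.and_eventually hev).mono fun k ⟨h1, h2, h3⟩ =>
          ⟨h2, h3, le_trans h1 (le_max_left _ _)⟩)
      exact hholeE x ⟨lt_of_lt_of_le hm1 hx.1, lt_of_le_of_lt hx.2 hc'⟩ hxE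
    · intro c hc
      filter_upwards [htm, htb.eventually_lt_const hc] with k h1 h2
      exact lt_of_le_of_lt (csInf_le ((hEk k).inter_right isClosed_Ici).bddBelow ⟨ht k, h1.le⟩) h2
end

section
/- Let X be a normed vector space, d(u,v) = ‖v−u‖, δ(u,v) = (μ/2)‖v−u‖² with μ > 0, and ℰ(t,·) Gateaux differentiable. If r < s, ϑ(s) ∈ M(t, ϑ(r)) (i.e. ϑ(s) minimizes v ↦ ℰ(t,v) + ‖v−ϑ(r)‖ + (μ/2)‖v−ϑ(r)‖²) with ϑ(s) ≠ ϑ(r), and the Gateaux differential ξ of ℰ(t,·) at ϑ(s) lies in the dual unit ball (‖ξ‖_* ≤ 1), then a contradiction arises: formally, (1 + μ‖ϑ(s)−ϑ(r)‖)‖N(ϑ(s)−ϑ(r))‖_* ≤ ‖ϑ(s)−ϑ(r)‖ where N is the subdifferential of (1/2)‖·‖², which is impossible since ‖N(x)‖_* = ‖x‖. Hence if ϑ(s) ∈ M(t,ϑ(r)) and ℰ(t,·) is Gateaux differentiable with gradient in the unit dual ball at ϑ(s), then ϑ(s) = ϑ(r). -/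
/-!
Move from the minimizer `y` towards `x` along the segment `y + τ • (x - y)`. With
`r = ‖y - x‖`, the penalty `‖v - x‖ + (μ/2) ‖v - x‖²` decreases at rate `r (1 + μ r)`, while
`E` increases at rate `ξ (x - y) ≤ ‖ξ‖ r ≤ r`. Minimality gives `r (1 + μ r) ≤ r`, so `μ r² ≤ 0`
and `r = 0`.
-/

open Set

theorem IsMinOn.hasDerivAt_nonneg_of_Icc {f : ℝ → ℝ} {f' a b : ℝ} (hab : a < b)
    (hmin : IsMinOn f (Icc a b) a) (hf : HasDerivAt f f' a) : 0 ≤ f' := by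
  have hcone : b - a ∈ posTangentConeAt (Icc a b) a :=
    sub_mem_posTangentConeAt_of_segment_subset (segment_eq_Icc hab.le).subset
  have := hmin.localize.hasFDerivWithinAt_nonneg
    hf.hasDerivWithinAt.hasFDerivWithinAt hcone
  rw [ContinuousLinearMap.toSpanSingleton_apply, smul_eq_mul] at this
  exact nonneg_of_mul_nonneg_right (by linarith) (sub_pos.mpr hab)

section MinimizerAlongSegment

variable {X : Type*} [NormedAddCommGroup X] [NormedSpace ℝ X]

theorem norm_add_smul_sub_sub_sub {τ : ℝ} (hτ : τ ≤ 1) (x y : X) :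
    ‖y + τ • (x - y) - x‖ = (1 - τ) * ‖y - x‖ := by
  have : y + τ • (x - y) - x = (1 - τ) • (y - x) := by
    rw [sub_smul, one_smul, smul_sub, smul_sub]; abel
  rw [this, norm_smul, Real.norm_of_nonneg (sub_nonneg.mpr hτ)]

-- On the segment from `y` to `x` the penalty is `φ ((1 - τ) ‖y - x‖)`, a smooth function of `τ`
-- even though `‖· - x‖` is not differentiable.
theorem norm_sub_mul_le_of_minimizes_add_comp_norm_sub {E : X → ℝ} {x y : X} {φ : ℝ → ℝ}
    {φ' e : ℝ} (hmin : ∀ v, E y + φ ‖y - x‖ ≤ E v + φ ‖v - x‖)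
    (hφ : HasDerivAt φ φ' ‖y - x‖)
    (hE : HasDerivAt (fun τ : ℝ => E (y + τ • (x - y))) e 0) :
    ‖y - x‖ * φ' ≤ e := by
  set r := ‖y - x‖
  set F : ℝ → ℝ := fun τ => E (y + τ • (x - y)) + φ ((1 - τ) * r)
  have hF : HasDerivAt F (e + φ' * -r) 0 := by
    have hline : HasDerivAt (fun τ : ℝ => (1 - τ) * r) (-r) 0 := by
      simpa using ((hasDerivAt_id (0 : ℝ)).const_sub 1).mul_const r
    exact hE.add (hφ.comp_of_eq 0 hline (by simp))
  have hFmin : IsMinOn F (Icc 0 1) 0 := fun τ hτ => by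
    have := hmin (y + τ • (x - y))
    rw [norm_add_smul_sub_sub_sub hτ.2] at this
    simpa [F] using this
  linarith [hFmin.hasDerivAt_nonneg_of_Icc zero_lt_one hF]

end MinimizerAlongSegment

/-- in a normed space with `d(u,v) = ‖v-u‖` and viscous correction
`δ(u,v) = (μ/2)‖v-u‖²`, `μ > 0`, if `y` minimizes `v ↦ E(v) + ‖v-x‖ + (μ/2)‖v-x‖²`
and `E` is Gateaux differentiable at `y` with differential `ξ` in the dual unit ball
(`‖ξ‖ ≤ 1`), then `y = x`. -/
theorem stmt19 {X : Type*} [NormedAddCommGroup X] [NormedSpace ℝ X]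
    (E : X → ℝ) (μ : ℝ) (hμ : 0 < μ) (x y : X)
    (hmin : ∀ v : X, E y + ‖y - x‖ + (μ/2) * ‖y - x‖^2 ≤
      E v + ‖v - x‖ + (μ/2) * ‖v - x‖^2)
    (ξ : X →L[ℝ] ℝ)
    (hGateaux : ∀ h : X, HasDerivAt (fun τ : ℝ => E (y + τ • h)) (ξ h) 0)
    (hξ : ‖ξ‖ ≤ 1) :
    y = x := by
  set r := ‖y - x‖
  have hφ : HasDerivAt (fun s : ℝ => s + μ / 2 * s ^ 2) (1 + μ * r) r := by
    refine ((hasDerivAt_id' r).add ((hasDerivAt_pow 2 r).const_mul (μ / 2))).congr_deriv ?_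
    norm_num
    ring
  have hfirst : r * (1 + μ * r) ≤ ξ (x - y) :=
    norm_sub_mul_le_of_minimizes_add_comp_norm_sub
      (fun v => by simpa only [add_assoc] using hmin v) hφ (hGateaux (x - y))
  have hdual : ξ (x - y) ≤ r := by
    calc ξ (x - y) ≤ ‖ξ (x - y)‖ := le_abs_self _
      _ ≤ 1 * ‖x - y‖ := ξ.le_of_opNorm_le hξ _
      _ = r := by rw [one_mul, norm_sub_rev]
  have hr : r = 0 := by
    by_contra hr
    have hr_pos : 0 < r := (norm_nonneg _).lt_of_ne' hr
    nlinarith [mul_pos hμ (mul_pos hr_pos hr_pos)]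
  exact sub_eq_zero.mp (norm_eq_zero.mp hr)
end
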